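/- arXiv:1306.5503 — 9 statements merged into one kernel-verified Lean document; each statement's English description precedes it below -/
import Mathlib

section
/- The collection of all strong sets of a closure system (V, Q) satisfying (I₀) forms an interval system: it is an algebraic closure system containing ∅ and all singletons, closed under union of intersecting members (I₁), and closed under differences of properly overlapping members (I₂). -/
variable {V : Type*}

/-- `Q` is a closure system on `V`: it contains `V` and is closed under
intersections of nonempty subfamilies. -/
def IsClosureSystem (Q : Set (Set V)) : Prop :=
  Set.univ ∈ Q ∧ ∀ F ⊆ Q, F.Nonempty → ⋂₀ F ∈ Q

/-- Algebraic: the union of any nonempty chain of closed sets is closed. -/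
def IsAlgebraicSystem (Q : Set (Set V)) : Prop :=
  ∀ C ⊆ Q, C.Nonempty → IsChain (· ⊆ ·) C → ⋃₀ C ∈ Q

/-- Condition (I₀): the empty set and all singletons are closed. -/
def CondI0 (Q : Set (Set V)) : Prop := ∅ ∈ Q ∧ ∀ x : V, {x} ∈ Q

/-- Condition (I₁): the union of two intersecting members is a member. -/
def CondI1 (Q : Set (Set V)) : Prop :=
  ∀ A ∈ Q, ∀ B ∈ Q, (A ∩ B).Nonempty → A ∪ B ∈ Q

/-- Condition (I₂): differences of properly overlapping members are members. -/
def CondI2 (Q : Set (Set V)) : Prop :=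
  ∀ A ∈ Q, ∀ B ∈ Q, (A ∩ B).Nonempty → ¬ A ⊆ B → ¬ B ⊆ A → A \ B ∈ Q ∧ B \ A ∈ Q

/-- An interval system: an algebraic closure system satisfying (I₀), (I₁), (I₂). -/
def IsIntervalSystem (Q : Set (Set V)) : Prop :=
  IsClosureSystem Q ∧ IsAlgebraicSystem Q ∧ CondI0 Q ∧ CondI1 Q ∧ CondI2 Q

/-- `A` is a strong set of the closure system `Q`. -/
def IsStrong (Q : Set (Set V)) (A : Set V) : Prop :=
  A ∈ Q ∧ ∀ B ∈ Q, (A ∩ B).Nonempty → A ⊆ B ∨ B ⊆ A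

/-- A decomposition: a partition of `V` (coded as a setoid) all of whose
blocks belong to `Q`.  The refinement order on partitions corresponds to the
order on `Setoid V` (finer below). -/
def IsDecomp (Q : Set (Set V)) (π : Setoid V) : Prop :=
  ∀ x : V, {y | π.r x y} ∈ Q

/-- The lattice `D(V,Q)` of decompositions, as a subtype of `Setoid V`
with the induced (refinement) partial order. -/
abbrev Decomp (Q : Set (Set V)) := {π : Setoid V // IsDecomp Q π}

namespace IsStrong

variable {Q : Set (Set V)}

theorem univ (hQ : Set.univ ∈ Q) : IsStrong Q Set.univ :=
  ⟨hQ, fun B _ _ => Or.inr B.subset_univ⟩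

theorem empty (hQ : ∅ ∈ Q) : IsStrong Q ∅ :=
  ⟨hQ, fun _ _ hne => absurd hne (by simp)⟩

theorem singleton {x : V} (hQ : {x} ∈ Q) : IsStrong Q {x} := by
  refine ⟨hQ, fun B _ ⟨y, hyx, hyB⟩ => Or.inl ?_⟩
  rw [Set.mem_singleton_iff.1 hyx] at hyB
  exact Set.singleton_subset_iff.2 hyB

theorem sInter {F : Set (Set V)} (hF : ∀ A ∈ F, IsStrong Q A) (hQ : ⋂₀ F ∈ Q) :
    IsStrong Q (⋂₀ F) := by
  refine ⟨hQ, fun B hB ⟨x, hxF, hxB⟩ => ?_⟩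
  by_cases h : ∃ A ∈ F, A ⊆ B
  · obtain ⟨A, hAF, hAB⟩ := h
    exact Or.inl ((Set.sInter_subset_of_mem hAF).trans hAB)
  · push Not at h
    exact Or.inr <| Set.subset_sInter fun A hAF =>
      ((hF A hAF).2 B hB ⟨x, hxF A hAF, hxB⟩).resolve_left (h A hAF)

theorem sUnion {C : Set (Set V)} (hC : ∀ A ∈ C, IsStrong Q A) (hchain : IsChain (· ⊆ ·) C)
    (hQ : ⋃₀ C ∈ Q) : IsStrong Q (⋃₀ C) := by
  refine ⟨hQ, fun B hB ⟨x, ⟨A, hAC, hxA⟩, hxB⟩ => ?_⟩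
  by_cases h : ∀ A' ∈ C, A' ⊆ B
  · exact Or.inl (Set.sUnion_subset h)
  · push Not at h
    obtain ⟨A', hA'C, hA'B⟩ := h
    -- the larger of `A` and `A'` meets `B` at `x` without lying inside `B`
    obtain ⟨M, hMC, hAM, hA'M⟩ : ∃ M ∈ C, A ⊆ M ∧ A' ⊆ M := by
      rcases hchain.total hAC hA'C with hAA' | hA'A
      · exact ⟨A', hA'C, hAA', le_rfl⟩
      · exact ⟨A, hAC, le_rfl, hA'A⟩
    have hBM : B ⊆ M := ((hC M hMC).2 B hB ⟨x, hAM hxA, hxB⟩).resolve_left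
      fun hMB => hA'B (hA'M.trans hMB)
    exact Or.inr (hBM.trans (Set.subset_sUnion_of_mem hMC))

theorem union {A B : Set V} (hA : IsStrong Q A) (hB : IsStrong Q B) (hne : (A ∩ B).Nonempty) :
    IsStrong Q (A ∪ B) := by
  rcases hA.2 B hB.1 hne with h | h
  · rwa [Set.union_eq_self_of_subset_left h]
  · rwa [Set.union_eq_self_of_subset_right h]

end IsStrong

/-- The strong sets of a closure system satisfying (I₀) form an interval
system. -/
theorem stmt3 (Q : Set (Set V)) (hC : IsClosureSystem Q) (hA : IsAlgebraicSystem Q)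
    (h0 : CondI0 Q) :
    IsIntervalSystem {A : Set V | IsStrong Q A} := by
  refine ⟨⟨IsStrong.univ hC.1, fun F hF hFne => ?_⟩, fun C hCs hCne hchain => ?_,
    ⟨IsStrong.empty h0.1, fun x => IsStrong.singleton (h0.2 x)⟩,
    fun A hAs B hBs hne => hAs.union hBs hne, fun A hAs B hBs hne hAB hBA => ?_⟩
  · exact IsStrong.sInter hF (hC.2 F (fun A hAF => (hF hAF).1) hFne)
  · exact IsStrong.sUnion hCs hchain (hA C (fun A hAC => (hCs hAC).1) hCne hchain)
  · -- strong sets never overlap properly, so (I₂) holds vacuously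
    exact ((hAs.2 B hBs.1 hne).elim hAB hBA).elim
end

section
/- If (V, Q) is a closure system, then the set D(V, Q) of all partitions of V whose blocks are all closed sets, ordered by refinement, is a complete lattice with greatest element {V}. -/
variable {V : Type*}

/-!
The block of `x` in the meet of a family of partitions is the intersection of the blocks of `x`
in its members, so decompositions are closed under arbitrary meets in `Setoid V`; a poset with
all meets is a complete lattice, and its top is the empty meet, the one-block partition `{V}`.
-/

theorem IsClosureSystem.sInter_mem {Q : Set (Set V)} (hQ : IsClosureSystem Q) {F : Set (Set V)}
    (hF : F ⊆ Q) : ⋂₀ F ∈ Q := by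
  rcases F.eq_empty_or_nonempty with rfl | hne
  · simpa using hQ.1
  · exact hQ.2 F hF hne

theorem Setoid.setOf_sInf_rel (S : Set (Setoid V)) (x : V) :
    {y | (sInf S).r x y} = ⋂₀ ((fun π : Setoid V => {y | π.r x y}) '' S) := by
  ext y
  simp [Setoid.sInf_iff]

theorem IsDecomp.sInf {Q : Set (Set V)} (hQ : IsClosureSystem Q) {S : Set (Setoid V)}
    (hS : ∀ π ∈ S, IsDecomp Q π) : IsDecomp Q (sInf S) := fun x => by
  rw [Setoid.setOf_sInf_rel]
  refine hQ.sInter_mem ?_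
  rintro _ ⟨π, hπ, rfl⟩
  exact hS π hπ x

namespace Decomp

variable {Q : Set (Set V)}

abbrev infSet (hQ : IsClosureSystem Q) : InfSet (Decomp Q) :=
  ⟨fun S => ⟨sInf (Subtype.val '' S), IsDecomp.sInf hQ (by rintro _ ⟨π, _, rfl⟩; exact π.2)⟩⟩

theorem isGLB_sInf (hQ : IsClosureSystem Q) (S : Set (Decomp Q)) :
    IsGLB S ((infSet hQ).sInf S) := by
  refine ⟨fun π hπ => ?_, fun σ hσ => ?_⟩
  · exact (sInf_le ⟨π, hπ, rfl⟩ : sInf (Subtype.val '' S) ≤ π.1)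
  · exact (le_sInf (by rintro _ ⟨π, hπ, rfl⟩; exact hσ hπ) : σ.1 ≤ sInf (Subtype.val '' S))

abbrev completeLattice (hQ : IsClosureSystem Q) : CompleteLattice (Decomp Q) :=
  letI := infSet hQ
  completeLatticeOfInf (Decomp Q) (isGLB_sInf hQ)

theorem val_top (hQ : IsClosureSystem Q) : ((completeLattice hQ).top : Decomp Q).1 = ⊤ := by
  show sInf (Subtype.val '' (∅ : Set (Decomp Q))) = ⊤
  rw [Set.image_empty, sInf_empty]

end Decomp

/-- For a closure system `(V,Q)`, the decompositions of `V`, ordered by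
refinement, form a complete lattice whose greatest element is `{V}`
(the top partition). -/
theorem stmt4 (Q : Set (Set V)) (hC : IsClosureSystem Q) :
    ∃ inst : CompleteLattice (Decomp Q),
      (∀ a b : Decomp Q, inst.le a b ↔ a.1 ≤ b.1) ∧
        (inst.top : Decomp Q).1 = (⊤ : Setoid V) :=
  ⟨Decomp.completeLattice hC, fun _ _ => Iff.rfl, Decomp.val_top hC⟩
end

section
/- If π₁ = {B_j | j ∈ J} and π₂ = {A_i | i ∈ I} are decompositions in a closure system (V, Q) and π₁ is covered by π₂ in D(V, Q), then there is a unique index k ∈ I and a subset J_k ⊆ J with at least two elements such that A_k = ⋃_{j∈J_k} B_j, and A_i is a block of π₁ for all i ≠ k. -/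
variable {V : Type*}

/-!
Let `A` be a block of `π₂` that is not a block of `π₁`. Since `π₁ ≤ π₂`, `A` is a union of
blocks of `π₁`, at least two of them. Fusing exactly these blocks into `A` and keeping all
other blocks of `π₁` gives a decomposition `σ` with `π₁ < σ ≤ π₂`. If some other block `A'`
of `π₂` were not a block of `π₁`, it would still be split in `σ`, so `σ < π₂`, contradicting
the covering.
-/

namespace Setoid

variable {r s : Setoid V}

theorem mem_of_rel_of_mem_classes (hrs : r ≤ s) {A : Set V} (hA : A ∈ s.classes)
    ⦃x y : V⦄ (hxy : r x y) (hx : x ∈ A) : y ∈ A := by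
  obtain ⟨c, rfl⟩ := hA
  exact s.trans (s.symm (hrs hxy)) hx

theorem rel_of_mem_classes {A : Set V} (hA : A ∈ s.classes) {x y : V} (hx : x ∈ A)
    (hy : y ∈ A) : s x y :=
  s.rel_iff_exists_classes.2 ⟨A, hA, hx, hy⟩

theorem exists_not_rel_of_notMem_classes (hrs : r ≤ s) {A : Set V} (hA : A ∈ s.classes)
    (hA' : A ∉ r.classes) : ∃ x ∈ A, ∃ y ∈ A, ¬ r x y := by
  by_contra! h
  obtain ⟨c, rfl⟩ := hA
  exact hA' ⟨c, Set.ext fun z => ⟨fun hz => h z hz c (s.refl c), fun hz => hrs hz⟩⟩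

theorem exists_mem_classes_notMem_classes_of_lt (h : r < s) :
    ∃ A ∈ s.classes, A ∉ r.classes := by
  obtain ⟨a, b, hab, hnab⟩ : ∃ a b, s a b ∧ ¬ r a b := by
    by_contra! h'
    exact h.not_ge fun a b => h' a b
  refine ⟨{z | s z a}, s.mem_classes a, ?_⟩
  rintro ⟨c, hc⟩
  have hac : r a c := (Set.ext_iff.1 hc a).1 (s.refl a)
  have hbc : r b c := (Set.ext_iff.1 hc b).1 (s.symm hab)
  exact hnab (r.trans hac (r.symm hbc))

theorem exists_nontrivial_subset_classes_sUnion_eq (hrs : r ≤ s) {A : Set V}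
    (hA : A ∈ s.classes) (hA' : A ∉ r.classes) :
    ∃ J ⊆ r.classes, J.Nontrivial ∧ A = ⋃₀ J := by
  have hsat := mem_of_rel_of_mem_classes hrs hA
  have hblock : ∀ x ∈ A, {z | r z x} ∈ {B ∈ r.classes | B ⊆ A} :=
    fun x hx => ⟨r.mem_classes x, fun z hz => hsat (r.symm hz) hx⟩
  refine ⟨{B ∈ r.classes | B ⊆ A}, fun B hB => hB.1, ?_, ?_⟩
  · obtain ⟨x, hx, y, hy, hxy⟩ := exists_not_rel_of_notMem_classes hrs hA hA'
    refine ⟨_, hblock x hx, _, hblock y hy, fun he => hxy (r.symm ?_)⟩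
    change y ∈ {z | r z x}
    rw [he]
    exact r.refl y
  · ext x
    exact ⟨fun hx => ⟨_, hblock x hx, r.refl x⟩, fun ⟨_, ⟨_, hBA⟩, hxB⟩ => hBA hxB⟩

def fuse (r : Setoid V) (A : Set V) (hA : ∀ ⦃x y⦄, r x y → x ∈ A → y ∈ A) : Setoid V where
  r x y := (x ∈ A ∧ y ∈ A) ∨ r x y
  iseqv :=
    { refl := fun x => Or.inr (r.refl x)
      symm := fun
        | Or.inl ⟨hx, hy⟩ => Or.inl ⟨hy, hx⟩
        | Or.inr hxy => Or.inr (r.symm hxy)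
      trans := fun {x y z} hxy hyz => by
        rcases hxy with ⟨hx, hy⟩ | hxy <;> rcases hyz with ⟨hy', hz⟩ | hyz
        · exact Or.inl ⟨hx, hz⟩
        · exact Or.inl ⟨hx, hA hyz hy⟩
        · exact Or.inl ⟨hA (r.symm hxy) hy', hz⟩
        · exact Or.inr (r.trans hxy hyz) }

variable {A : Set V} {hA : ∀ ⦃x y⦄, r x y → x ∈ A → y ∈ A}

theorem le_fuse : r ≤ r.fuse A hA := fun _ _ => Or.inr

theorem fuse_le (hrs : r ≤ s) (hAs : ∀ x ∈ A, ∀ y ∈ A, s x y) : r.fuse A hA ≤ s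
  | x, y, Or.inl ⟨hx, hy⟩ => hAs x hx y hy
  | _, _, Or.inr hxy => hrs hxy

theorem fuse_rel_iff_of_notMem {x y : V} (hx : x ∉ A) : r.fuse A hA x y ↔ r x y :=
  ⟨fun h => h.resolve_left fun h => hx h.1, Or.inr⟩

theorem fuse_rel_of_mem {x y : V} (hx : x ∈ A) (hy : y ∈ A) : r.fuse A hA x y :=
  Or.inl ⟨hx, hy⟩

end Setoid

theorem IsDecomp.mem_of_mem_classes {Q : Set (Set V)} {r : Setoid V} (hr : IsDecomp Q r)
    {A : Set V} (hA : A ∈ r.classes) : A ∈ Q := by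
  obtain ⟨a, rfl⟩ := hA
  convert hr a using 1
  exact Set.ext fun _ => r.comm

theorem IsDecomp.fuse {Q : Set (Set V)} {r : Setoid V} (hr : IsDecomp Q r) {A : Set V}
    (hA : ∀ ⦃x y⦄, r x y → x ∈ A → y ∈ A) (hAQ : A ∈ Q) : IsDecomp Q (r.fuse A hA) := by
  intro x
  by_cases hx : x ∈ A
  · convert hAQ using 1
    ext y
    exact ⟨fun h => h.elim And.right (hA · hx), fun hy => Or.inl ⟨hx, hy⟩⟩
  · convert hr x using 1
    ext y
    exact Setoid.fuse_rel_iff_of_notMem (hA := hA) hx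

theorem eq_of_notMem_classes_of_covering {Q : Set (Set V)} {π₁ π₂ : Setoid V}
    (h₁ : IsDecomp Q π₁) (h₂ : IsDecomp Q π₂) (hle : π₁ ≤ π₂)
    (hcov : ¬ ∃ σ : Setoid V, IsDecomp Q σ ∧ π₁ < σ ∧ σ < π₂)
    {A A' : Set V} (hA : A ∈ π₂.classes) (hA₁ : A ∉ π₁.classes)
    (hA' : A' ∈ π₂.classes) (hA'₁ : A' ∉ π₁.classes) : A' = A := by
  by_contra hne
  obtain ⟨x, hx, y, hy, hxy⟩ := Setoid.exists_not_rel_of_notMem_classes hle hA hA₁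
  obtain ⟨x', hx', y', hy', hxy'⟩ := Setoid.exists_not_rel_of_notMem_classes hle hA' hA'₁
  have hx'A : x' ∉ A := fun h => hne (Setoid.eq_of_mem_classes hA' hx' hA h)
  have hsat := Setoid.mem_of_rel_of_mem_classes hle hA
  refine hcov ⟨π₁.fuse A hsat, h₁.fuse hsat (h₂.mem_of_mem_classes hA), ?_, ?_⟩
  · exact Setoid.le_fuse.lt_of_not_ge fun h => hxy (h (Setoid.fuse_rel_of_mem hx hy))
  · refine (Setoid.fuse_le hle fun u hu v hv => Setoid.rel_of_mem_classes hA hu hv).lt_of_not_ge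
      fun h => hxy' ?_
    exact (Setoid.fuse_rel_iff_of_notMem hx'A).1 (h (Setoid.rel_of_mem_classes hA' hx' hy'))

theorem stmt8_general (Q : Set (Set V))
    (π₁ π₂ : Setoid V) (h₁ : IsDecomp Q π₁) (h₂ : IsDecomp Q π₂)
    (hlt : π₁ < π₂)
    (hcov : ¬ ∃ σ : Setoid V, IsDecomp Q σ ∧ π₁ < σ ∧ σ < π₂) :
    ∃ A ∈ π₂.classes,
      (∃ J ⊆ π₁.classes, J.Nontrivial ∧ A = ⋃₀ J) ∧
      (∀ B ∈ π₂.classes, B ≠ A → B ∈ π₁.classes) ∧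
      (∀ A' ∈ π₂.classes, A' ∉ π₁.classes → A' = A) := by
  obtain ⟨A, hA, hA₁⟩ := Setoid.exists_mem_classes_notMem_classes_of_lt hlt
  have unique : ∀ A' ∈ π₂.classes, A' ∉ π₁.classes → A' = A := fun A' hA' hA'₁ =>
    eq_of_notMem_classes_of_covering h₁ h₂ hlt.le hcov hA hA₁ hA' hA'₁
  refine ⟨A, hA, Setoid.exists_nontrivial_subset_classes_sUnion_eq hlt.le hA hA₁,
    fun B hB hBA => ?_, unique⟩
  by_contra hB₁
  exact hBA (unique B hB hB₁)

/-- Covering lemma: if `π₁ ≺ π₂` in `D(V,Q)` then exactly one block `A` of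
`π₂` is not a block of `π₁`; it is the union of at least two blocks of `π₁`,
and every other block of `π₂` is a block of `π₁`. -/
theorem stmt8 (Q : Set (Set V)) (hC : IsClosureSystem Q)
    (π₁ π₂ : Setoid V) (h₁ : IsDecomp Q π₁) (h₂ : IsDecomp Q π₂)
    (hlt : π₁ < π₂)
    (hcov : ¬ ∃ σ : Setoid V, IsDecomp Q σ ∧ π₁ < σ ∧ σ < π₂) :
    ∃ A ∈ π₂.classes,
      (∃ J ⊆ π₁.classes, J.Nontrivial ∧ A = ⋃₀ J) ∧
      (∀ B ∈ π₂.classes, B ≠ A → B ∈ π₁.classes) ∧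
      (∀ A' ∈ π₂.classes, A' ∉ π₁.classes → A' = A) :=
  stmt8_general Q π₁ π₂ h₁ h₂ hlt hcov
end

section
/- Let (V, Q) be a closure system satisfying (I₀) and π ∈ D(V, Q). Then π is completely join-irreducible in D(V, Q) if and only if π = π_A for some nonempty A ∈ Q such that the restricted closure system (A, Q_A) admits a greatest proper decomposition. -/
variable {V : Type*}

/-- `π_A`: the partition with block `A` and all other blocks singletons. -/
def piA (A : Set V) : Setoid V :=
  ⟨fun a b => a = b ∨ (a ∈ A ∧ b ∈ A), by
    constructor
    · intro a; exact Or.inl rfl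
    · intro a b h; aesop
    · intro a b c h1 h2; aesop⟩

/-- A decomposition of `A` in the restricted closure system `(A, Q_A)`,
`Q_A = {C ∩ A | C ∈ Q}`: a partition of `A` all of whose blocks are of the
form `C ∩ A` with `C ∈ Q`. -/
def IsRestDecomp (Q : Set (Set V)) (A : Set V) (μ : Setoid ↥A) : Prop :=
  ∀ x : ↥A, ∃ C ∈ Q, Subtype.val '' {y | μ.r x y} = C ∩ A

/-- `μ` is a greatest proper decomposition of `A` in `(A, Q_A)`: it is proper
(different from `{A}`, i.e. `μ ≠ ⊤`) and every proper decomposition of `A`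
refines it. -/
def IsGreatestProperDecomp (Q : Set (Set V)) (A : Set V) (μ : Setoid ↥A) : Prop :=
  IsRestDecomp Q A μ ∧ μ ≠ ⊤ ∧
    ∀ ν : Setoid ↥A, IsRestDecomp Q A ν → ν ≠ ⊤ → ν ≤ μ

/-- `π` is completely join-irreducible in the lattice `D(V,Q)`: it is not the
least decomposition `Δ` and whenever it is the join (least upper bound within
`D(V,Q)`) of a family of decompositions, it is one of them. -/
def IsCJI (Q : Set (Set V)) (π : Decomp Q) : Prop :=
  π.1 ≠ ⊥ ∧ ∀ S : Set (Decomp Q), IsLUB S π → π ∈ S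

/-!
In a lattice, an element is completely join-irreducible exactly when there is a greatest element
strictly below it. For a decomposition `π` with such an element `σ`, each `π_B` with `B` a block
of `π` is either `π` itself or below `σ`; as `π` is the join of these `π_B`, `π = π_A` for a
block `A`. Extending partitions of `A` by singletons outside `A` is an order isomorphism from the
decompositions of `(A, Q_A)` onto the decompositions below `π_A`, sending `{A}` to `π_A`, so the
greatest element strictly below `π_A` corresponds to a greatest proper decomposition of `A`.
-/

open Set

section Order

variable {α : Type*} [PartialOrder α] {a b : α}

theorem mem_of_isLUB_of_isGreatest_Iio (hb : IsGreatest (Iio a) b) {S : Set α}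
    (hS : IsLUB S a) : a ∈ S := by
  by_contra ha
  have hub : b ∈ upperBounds S := fun s hs => hb.2 ((hS.1 hs).lt_of_ne fun h => ha (h ▸ hs))
  exact (hb.1 : b < a).not_ge (hS.2 hub)

theorem exists_isGreatest_Iio_of_forall_isLUB_mem (hinf : ∀ c, ∃ m, IsGLB {a, c} m)
    (h : ∀ S : Set α, IsLUB S a → a ∈ S) : ∃ b, IsGreatest (Iio a) b := by
  obtain ⟨c, hc, hac⟩ : ∃ c ∈ upperBounds (Iio a), ¬ a ≤ c := by
    by_contra! hall
    exact lt_irrefl a (h (Iio a) ⟨fun _ hx => (mem_Iio.1 hx).le, hall⟩)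
  obtain ⟨m, hm⟩ := hinf c
  have hmc : m ≤ c := hm.1 (by simp)
  refine ⟨m, (hm.1 (by simp)).lt_of_ne ?_, fun d hd => hm.2 ?_⟩
  · rintro rfl
    exact hac hmc
  · rintro x (rfl | rfl)
    exacts [hd.le, hc hd]

end Order

variable {Q : Set (Set V)} {A : Set V}

theorem IsClosureSystem.inter_mem (hC : IsClosureSystem Q) {B B' : Set V} (hB : B ∈ Q)
    (hB' : B' ∈ Q) : B ∩ B' ∈ Q := by
  simpa using hC.2 {B, B'} (by rintro x (rfl | rfl) <;> assumption) ⟨B, by simp⟩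

theorem IsDecomp.inf (hC : IsClosureSystem Q) {σ τ : Setoid V} (hσ : IsDecomp Q σ)
    (hτ : IsDecomp Q τ) : IsDecomp Q (σ ⊓ τ) :=
  fun x => hC.inter_mem (hσ x) (hτ x)

theorem isGLB_pair_decomp (hC : IsClosureSystem Q) (σ τ : Decomp Q) :
    IsGLB {σ, τ} ⟨σ.1 ⊓ τ.1, σ.2.inf hC τ.2⟩ := by
  refine ⟨?_, fun ρ hρ =>
    show ρ.1 ≤ σ.1 ⊓ τ.1 from le_inf (hρ (mem_insert σ _)) (hρ (mem_insert_of_mem σ rfl))⟩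
  rintro x (rfl | rfl)
  exacts [inf_le_left (a := x.1), inf_le_right (b := x.1)]

theorem isCJI_iff_exists_isGreatest_Iio (hC : IsClosureSystem Q) (π : Decomp Q) :
    IsCJI Q π ↔ ∃ σ, IsGreatest (Iio π) σ := by
  refine ⟨fun h => exists_isGreatest_Iio_of_forall_isLUB_mem
    (fun τ => ⟨_, isGLB_pair_decomp hC π τ⟩) h.2, fun ⟨σ, hσ⟩ => ⟨?_, ?_⟩⟩
  · exact ne_bot_of_gt (show σ.1 < π.1 from hσ.1)
  · exact fun _ => mem_of_isLUB_of_isGreatest_Iio hσ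

def extendSetoid (A : Set V) (μ : Setoid A) : Setoid V where
  r x y := x = y ∨ ∃ (hx : x ∈ A) (hy : y ∈ A), μ ⟨x, hx⟩ ⟨y, hy⟩
  iseqv := by
    refine ⟨fun _ => Or.inl rfl, ?_, ?_⟩
    · rintro x y (rfl | ⟨hx, hy, h⟩)
      exacts [Or.inl rfl, Or.inr ⟨hy, hx, μ.symm h⟩]
    · rintro x y z (rfl | ⟨hx, hy, h⟩) (rfl | ⟨_, hz, h'⟩)
      exacts [Or.inl rfl, Or.inr ⟨_, _, h'⟩, Or.inr ⟨_, _, h⟩, Or.inr ⟨hx, hz, μ.trans h h'⟩]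

theorem extendSetoid_le_iff {μ : Setoid A} {σ : Setoid V} :
    extendSetoid A μ ≤ σ ↔ μ ≤ σ.comap Subtype.val := by
  simp only [Setoid.le_def, Setoid.comap_rel]
  refine ⟨fun h x y hxy => h (Or.inr ⟨x.2, y.2, hxy⟩), ?_⟩
  rintro h x y (rfl | ⟨hx, hy, hxy⟩)
  exacts [σ.refl x, h hxy]

theorem gc_extendSetoid_comap :
    GaloisConnection (extendSetoid A) (Setoid.comap (Subtype.val : A → V)) :=
  fun _ _ => extendSetoid_le_iff

theorem comap_extendSetoid (μ : Setoid A) : (extendSetoid A μ).comap Subtype.val = μ := by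
  ext x y
  refine ⟨?_, fun h => Or.inr ⟨x.2, y.2, h⟩⟩
  rintro (h | ⟨_, _, h⟩)
  exacts [Subtype.ext h ▸ μ.refl x, h]

theorem extendSetoid_top : extendSetoid A ⊤ = piA A := by
  ext x y
  exact or_congr Iff.rfl ⟨fun ⟨hx, hy, _⟩ => ⟨hx, hy⟩, fun ⟨hx, hy⟩ => ⟨hx, hy, trivial⟩⟩

theorem extendSetoid_le_piA (μ : Setoid A) : extendSetoid A μ ≤ piA A :=
  extendSetoid_top (A := A) ▸ gc_extendSetoid_comap.monotone_l le_top

theorem extendSetoid_comap {σ : Setoid V} (h : σ ≤ piA A) :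
    extendSetoid A (σ.comap Subtype.val) = σ := by
  refine le_antisymm (gc_extendSetoid_comap.l_u_le σ) (Setoid.le_def.2 fun {x y} hxy => ?_)
  rcases Setoid.le_def.1 h hxy with rfl | ⟨hx, hy⟩
  exacts [Or.inl rfl, Or.inr ⟨hx, hy, hxy⟩]

theorem comap_eq_top_iff {σ : Setoid V} (h : σ ≤ piA A) :
    σ.comap (Subtype.val : A → V) = ⊤ ↔ σ = piA A := by
  refine ⟨fun htop => ?_, ?_⟩
  · rw [← extendSetoid_comap h, htop, extendSetoid_top]
  · rintro rfl
    rw [← extendSetoid_top, comap_extendSetoid]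

theorem IsDecomp.isRestDecomp_comap {σ : Setoid V} (hσ : IsDecomp Q σ) :
    IsRestDecomp Q A (σ.comap Subtype.val) := by
  refine fun x => ⟨{y | σ x y}, hσ x, ?_⟩
  ext y
  simp only [mem_image, mem_inter_iff, Setoid.comap_rel]
  exact ⟨fun ⟨z, hz, hzy⟩ => hzy ▸ ⟨hz, z.2⟩, fun ⟨hy, hyA⟩ => ⟨⟨y, hyA⟩, hy, rfl⟩⟩

theorem isRestDecomp_top (hA : A ∈ Q) : IsRestDecomp Q A ⊤ :=
  fun _ => ⟨A, hA, by simp⟩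

theorem IsRestDecomp.isDecomp_extendSetoid (hC : IsClosureSystem Q) (h0 : CondI0 Q)
    (hA : A ∈ Q) {μ : Setoid A} (hμ : IsRestDecomp Q A μ) : IsDecomp Q (extendSetoid A μ) := by
  intro x
  by_cases hx : x ∈ A
  · obtain ⟨C, hCQ, hCA⟩ := hμ ⟨x, hx⟩
    convert hC.inter_mem hCQ hA using 1
    rw [← hCA]
    ext y
    refine ⟨?_, fun ⟨z, hz, hzy⟩ => hzy ▸ Or.inr ⟨hx, z.2, hz⟩⟩
    rintro (rfl | ⟨_, hy, h⟩)
    exacts [⟨_, μ.refl _, rfl⟩, ⟨_, h, rfl⟩]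
  · convert h0.2 x using 1
    ext y
    refine ⟨?_, fun h => Or.inl h.symm⟩
    rintro (rfl | ⟨hx', _⟩)
    exacts [rfl, absurd hx' hx]

theorem isDecomp_piA (hC : IsClosureSystem Q) (h0 : CondI0 Q) (hA : A ∈ Q) :
    IsDecomp Q (piA A) :=
  extendSetoid_top (A := A) ▸ (isRestDecomp_top hA).isDecomp_extendSetoid hC h0 hA

theorem piA_block_le (σ : Setoid V) (x : V) : piA {y | σ x y} ≤ σ :=
  Setoid.le_def.2 fun {_ _} h =>
    h.elim (fun h => h ▸ σ.refl _) fun ⟨hu, hv⟩ => σ.trans (σ.symm hu) hv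

theorem le_of_forall_piA_block_le {σ τ : Setoid V} (h : ∀ x, piA {y | σ x y} ≤ τ) : σ ≤ τ :=
  Setoid.le_def.2 fun {x _} hxy => Setoid.le_def.1 (h x) (Or.inr ⟨σ.refl x, hxy⟩)

theorem exists_eq_piA_of_isGreatest_Iio (hC : IsClosureSystem Q) (h0 : CondI0 Q)
    {π σ : Decomp Q} (hσ : IsGreatest (Iio π) σ) :
    ∃ A ∈ Q, A.Nonempty ∧ π.1 = piA A := by
  by_contra! hne
  have hblock (x : V) : piA {y | π.1 x y} ≤ σ.1 := by
    let β : Decomp Q := ⟨_, isDecomp_piA hC h0 (π.2 x)⟩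
    have hβ : β < π := lt_of_le_of_ne (piA_block_le π.1 x)
      fun h => hne _ (π.2 x) ⟨x, π.1.refl x⟩ (congrArg Subtype.val h).symm
    exact hσ.2 hβ
  exact (show σ < π from hσ.1).not_ge (le_of_forall_piA_block_le hblock)

theorem exists_isGreatest_Iio_iff_exists_isGreatestProperDecomp (hC : IsClosureSystem Q)
    (h0 : CondI0 Q) (hA : A ∈ Q) {π : Decomp Q} (hπ : π.1 = piA A) :
    (∃ σ, IsGreatest (Iio π) σ) ↔ ∃ μ, IsGreatestProperDecomp Q A μ := by
  have hlt {σ : Decomp Q} : σ < π ↔ σ.1 ≤ piA A ∧ σ.1.comap (Subtype.val : A → V) ≠ ⊤ := by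
    rw [← Subtype.coe_lt_coe, lt_iff_le_and_ne, hπ]
    exact and_congr_right fun h => (comap_eq_top_iff h).not.symm
  constructor
  · rintro ⟨σ, hσ, hgreatest⟩
    obtain ⟨-, hσtop⟩ := hlt.1 hσ
    refine ⟨_, σ.2.isRestDecomp_comap, hσtop, fun ν hν hνtop => ?_⟩
    let τ : Decomp Q := ⟨extendSetoid A ν, hν.isDecomp_extendSetoid hC h0 hA⟩
    have hτ : τ < π := hlt.2 ⟨extendSetoid_le_piA ν, by rwa [comap_extendSetoid]⟩
    exact extendSetoid_le_iff.1 (hgreatest hτ)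
  · rintro ⟨μ, hμ, hμtop, hgreatest⟩
    refine ⟨⟨extendSetoid A μ, hμ.isDecomp_extendSetoid hC h0 hA⟩, hlt.2 ⟨?_, ?_⟩, ?_⟩
    · exact extendSetoid_le_piA μ
    · rwa [comap_extendSetoid]
    · intro σ hσ
      obtain ⟨hσA, hσtop⟩ := hlt.1 hσ
      show σ.1 ≤ extendSetoid A μ
      rw [← extendSetoid_comap hσA]
      exact gc_extendSetoid_comap.monotone_l (hgreatest _ σ.2.isRestDecomp_comap hσtop)

/-- For a closure system satisfying (I₀), a decomposition `π` is completely
join-irreducible in `D(V,Q)` iff `π = π_A` for some nonempty closed set `A`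
admitting a greatest proper decomposition in `(A, Q_A)`. -/
theorem stmt9 (Q : Set (Set V)) (hC : IsClosureSystem Q) (h0 : CondI0 Q)
    (π : Decomp Q) :
    IsCJI Q π ↔
      ∃ A ∈ Q, A.Nonempty ∧ π.1 = piA A ∧
        ∃ μ : Setoid ↥A, IsGreatestProperDecomp Q A μ := by
  rw [isCJI_iff_exists_isGreatest_Iio hC]
  constructor
  · rintro ⟨σ, hσ⟩
    obtain ⟨A, hA, hAne, hπ⟩ := exists_eq_piA_of_isGreatest_Iio hC h0 hσ
    exact ⟨A, hA, hAne, hπ,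
      (exists_isGreatest_Iio_iff_exists_isGreatestProperDecomp hC h0 hA hπ).1 ⟨σ, hσ⟩⟩
  · rintro ⟨A, hA, -, hπ, hμ⟩
    exact (exists_isGreatest_Iio_iff_exists_isGreatestProperDecomp hC h0 hA hπ).2 hμ
end

section
/- Let (V, I) be an interval system. If a nonempty interval A ∈ I admits a greatest proper decomposition {B_j | j ∈ J} with |J| ≥ 3, then A is a strong set of (V, I). -/
variable {V : Type*}

/-! If an interval `B` overlaps `A` without either containing the other, then `A ∩ B` and
`A \ B` (an interval by (I₂)) split `A` into a proper decomposition with two blocks. A greatest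
proper decomposition is coarser than it, hence has at most two blocks. -/

namespace Setoid

variable {α : Type*}

theorem classes_eq_image_of_le {r s : Setoid α} (h : r ≤ s) :
    s.classes = (fun C => {x | ∃ y ∈ C, s x y}) '' r.classes := by
  ext D
  constructor
  · rintro ⟨y, rfl⟩
    refine ⟨{x | r x y}, r.mem_classes y, ?_⟩
    ext x
    exact ⟨fun ⟨z, hzy, hxz⟩ => s.trans' hxz (h hzy), fun hxy => ⟨y, r.refl' y, hxy⟩⟩
  · rintro ⟨_, ⟨y, rfl⟩, rfl⟩
    refine ⟨y, ?_⟩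
    ext x
    exact ⟨fun ⟨z, hzy, hxz⟩ => s.trans' hxz (h hzy), fun hxy => ⟨y, r.refl' y, hxy⟩⟩

theorem encard_classes_le_of_le {r s : Setoid α} (h : r ≤ s) :
    s.classes.encard ≤ r.classes.encard := by
  rw [classes_eq_image_of_le h]
  exact Set.encard_image_le _ _

theorem encard_classes_ker_le {β : Type*} (f : α → β) :
    (ker f).classes.encard ≤ ENat.card β := by
  calc (ker f).classes.encard
      ≤ (Set.range fun y => {x | f x = y}).encard :=
        Set.encard_le_encard (classes_ker_subset_fiber_set f)
    _ ≤ ENat.card β := by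
        rw [← Set.image_univ, ← Set.encard_univ]
        exact Set.encard_image_le _ _

theorem ker_ne_top {β : Type*} {f : α → β} {a b : α} (h : f a ≠ f b) : ker f ≠ ⊤ :=
  fun htop => h (ker_def.mp (htop ▸ trivial : ker f a b))

end Setoid

theorem Set.three_le_encard {α : Type*} {s : Set α}
    (h : ∃ a ∈ s, ∃ b ∈ s, ∃ c ∈ s, a ≠ b ∧ a ≠ c ∧ b ≠ c) : 3 ≤ s.encard := by
  obtain ⟨a, ha, b, hb, c, hc, hab, hac, hbc⟩ := h
  calc (3 : ℕ∞) = ({a, b, c} : Set α).encard :=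
        (Set.encard_eq_three.mpr ⟨a, b, c, hab, hac, hbc, rfl⟩).symm
    _ ≤ s.encard := Set.encard_le_encard (by simp [Set.insert_subset_iff, ha, hb, hc])

theorem ENat.card_prop : ENat.card Prop = 2 := by
  simp [ENat.card_eq_coe_fintype_card, Fintype.card_prop]

theorem isRestDecomp_ker_mem {Q : Set (Set V)} {A B : Set V} (hB : B ∈ Q) (hAB : A \ B ∈ Q) :
    IsRestDecomp Q A (Setoid.ker fun a : A => (a : V) ∈ B) := by
  intro x
  by_cases hx : (x : V) ∈ B
  · refine ⟨B, hB, ?_⟩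
    ext v
    simp [Setoid.ker_def, hx, and_comm]
  · refine ⟨A \ B, hAB, ?_⟩
    ext v
    simp +contextual [Setoid.ker_def, hx]

theorem IsGreatestProperDecomp.encard_classes_le_two_of_overlap {Q : Set (Set V)} (hQ : CondI2 Q)
    {A B : Set V} (hA : A ∈ Q) (hB : B ∈ Q) (hmeet : (A ∩ B).Nonempty) (hAB : ¬A ⊆ B)
    (hBA : ¬B ⊆ A) {μ : Setoid A} (hμ : IsGreatestProperDecomp Q A μ) :
    μ.classes.encard ≤ 2 := by
  obtain ⟨x, hxA, hxB⟩ := hmeet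
  obtain ⟨y, hyA, hyB⟩ := Set.not_subset.mp hAB
  have hdiff : A \ B ∈ Q := (hQ A hA B hB ⟨x, hxA, hxB⟩ hAB hBA).1
  have hne : (Setoid.ker fun a : A => (a : V) ∈ B) ≠ ⊤ :=
    Setoid.ker_ne_top (a := ⟨x, hxA⟩) (b := ⟨y, hyA⟩) (by simp [hxB, hyB])
  calc μ.classes.encard
      ≤ (Setoid.ker fun a : A => (a : V) ∈ B).classes.encard :=
        Setoid.encard_classes_le_of_le (hμ.2.2 _ (isRestDecomp_ker_mem hB hdiff) hne)
    _ ≤ ENat.card Prop := Setoid.encard_classes_ker_le _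
    _ = 2 := ENat.card_prop

theorem stmt10_general (I : Set (Set V)) (hI : IsIntervalSystem I)
    (A : Set V) (hA : A ∈ I)
    (μ : Setoid ↥A) (hμ : IsGreatestProperDecomp I A μ)
    (h3 : ∃ B₁ ∈ μ.classes, ∃ B₂ ∈ μ.classes, ∃ B₃ ∈ μ.classes,
      B₁ ≠ B₂ ∧ B₁ ≠ B₃ ∧ B₂ ≠ B₃) :
    IsStrong I A := by
  refine ⟨hA, fun B hB hmeet => ?_⟩
  by_contra! hoverlap
  have hle := hμ.encard_classes_le_two_of_overlap hI.2.2.2.2 hA hB hmeet hoverlap.1 hoverlap.2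
  have hge := Set.three_le_encard h3
  exact absurd (hge.trans hle) (by decide)

/-- In an interval system, if a nonempty interval `A` admits a greatest
proper decomposition with at least three blocks, then `A` is a strong set. -/
theorem stmt10 (I : Set (Set V)) (hI : IsIntervalSystem I)
    (A : Set V) (hA : A ∈ I) (hne : A.Nonempty)
    (μ : Setoid ↥A) (hμ : IsGreatestProperDecomp I A μ)
    (h3 : ∃ B₁ ∈ μ.classes, ∃ B₂ ∈ μ.classes, ∃ B₃ ∈ μ.classes,
      B₁ ≠ B₂ ∧ B₁ ≠ B₃ ∧ B₂ ≠ B₃) :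
    IsStrong I A :=
  stmt10_general I hI A hA μ hμ h3
end

section
/- Let (V, I) be an interval system. If A ∈ I admits a greatest proper decomposition {B_j | j ∈ J} (|J| ≥ 2), then every block B_j is a strong set of (V, I). -/
variable {V : Type*}

/-! Let `C ∈ I` properly overlap a block `B` of `μ`. If `C ⊆ A` and `B ∪ C ≠ A`, collapsing
`B ∪ C ∈ I` to one block gives a proper decomposition of `A`; it refines `μ`, so `C ⊆ B`.
Otherwise `A \ C ∈ I` (it is `B \ C` when `B ∪ C = A`, and comes from (I₂) for `A` and `C`
when `C ⊄ A`), so `{A ∩ C, A \ C}` is a proper decomposition; it refines `μ`, and the block `B`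
meets both of its parts, so `μ = ⊤`. -/

lemma IsClosureSystem.inter_mem_s11 {Q : Set (Set V)} (hQ : IsClosureSystem Q) {X Y : Set V}
    (hX : X ∈ Q) (hY : Y ∈ Q) : X ∩ Y ∈ Q := by
  simpa only [Set.sInter_pair] using
    hQ.2 {X, Y} (Set.pair_subset hX hY) (Set.insert_nonempty X {Y})

section Blocks

variable {A : Set V}

lemma val_mem_image_rel_iff (μ : Setoid ↥A) (x y : ↥A) :
    (y : V) ∈ Subtype.val '' {z | μ.r x z} ↔ μ.r x y :=
  Subtype.val_injective.mem_set_image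

lemma IsRestDecomp.image_rel_mem {Q : Set (Set V)} {μ : Setoid ↥A} (hμ : IsRestDecomp Q A μ)
    (hQ : IsClosureSystem Q) (hA : A ∈ Q) (x : ↥A) : Subtype.val '' {y | μ.r x y} ∈ Q := by
  obtain ⟨C, hC, hCA⟩ := hμ x
  exact hCA ▸ hQ.inter_mem_s11 hC hA

def splitSetoid (A C : Set V) : Setoid ↥A :=
  Setoid.ker fun a : ↥A => (a : V) ∈ C

lemma splitSetoid_rel {C : Set V} {a b : ↥A} :
    (splitSetoid A C).r a b ↔ ((a : V) ∈ C ↔ (b : V) ∈ C) :=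
  Setoid.ker_def.trans eq_iff_iff

lemma isRestDecomp_splitSetoid {Q : Set (Set V)} {C : Set V} (hC : C ∈ Q) (hAC : A \ C ∈ Q) :
    IsRestDecomp Q A (splitSetoid A C) := by
  intro z
  by_cases hz : (z : V) ∈ C
  · refine ⟨C, hC, Set.ext fun v => ⟨?_, fun hv => ⟨⟨v, hv.2⟩, ?_, rfl⟩⟩⟩
    · rintro ⟨y, hy, rfl⟩
      exact ⟨splitSetoid_rel.1 hy |>.1 hz, y.2⟩
    · exact splitSetoid_rel.2 (iff_of_true hz hv.1)
  · refine ⟨A \ C, hAC, Set.ext fun v => ⟨?_, fun hv => ⟨⟨v, hv.2⟩, ?_, rfl⟩⟩⟩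
    · rintro ⟨y, hy, rfl⟩
      exact ⟨⟨y.2, fun hyC => hz (splitSetoid_rel.1 hy |>.2 hyC)⟩, y.2⟩
    · exact splitSetoid_rel.2 (iff_of_false hz hv.1.2)

lemma splitSetoid_ne_top {C : Set V} {a b : ↥A} (ha : (a : V) ∈ C) (hb : (b : V) ∉ C) :
    splitSetoid A C ≠ ⊤ := fun h =>
  hb <| splitSetoid_rel.1 (Setoid.eq_top_iff.1 h a b) |>.1 ha

lemma eq_top_of_splitSetoid_le {C : Set V} {μ : Setoid ↥A} (hle : splitSetoid A C ≤ μ)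
    {a b : ↥A} (hab : μ.r a b) (ha : (a : V) ∈ C) (hb : (b : V) ∉ C) : μ = ⊤ := by
  have to_a : ∀ y, μ.r y a := fun y => by
    by_cases hy : (y : V) ∈ C
    · exact hle (splitSetoid_rel.2 (iff_of_true hy ha))
    · exact μ.trans' (hle (splitSetoid_rel.2 (iff_of_false hy hb))) (μ.symm' hab)
  exact Setoid.eq_top_iff.2 fun y z => μ.trans' (to_a y) (μ.symm' (to_a z))

def collapseSetoid (A D : Set V) : Setoid ↥A :=
  Setoid.comap Subtype.val (piA D)

lemma isRestDecomp_collapseSetoid {Q : Set (Set V)} (hQ : CondI0 Q) {D : Set V} (hD : D ∈ Q) :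
    IsRestDecomp Q A (collapseSetoid A D) := by
  intro z
  by_cases hz : (z : V) ∈ D
  · refine ⟨D, hD, Set.ext fun v => ⟨?_, fun hv => ⟨⟨v, hv.2⟩, Or.inr ⟨hz, hv.1⟩, rfl⟩⟩⟩
    rintro ⟨y, hy | hy, rfl⟩
    exacts [⟨hy ▸ hz, y.2⟩, ⟨hy.2, y.2⟩]
  · refine ⟨{(z : V)}, hQ.2 z, Set.ext fun v => ⟨?_, ?_⟩⟩
    · rintro ⟨y, hy | hy, rfl⟩
      exacts [⟨hy.symm, y.2⟩, absurd hy.1 hz]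
    · rintro ⟨rfl, hv⟩
      exact ⟨z, Or.inl rfl, rfl⟩

lemma collapseSetoid_ne_top {D : Set V} (hDA : D ⊆ A) (hD : D ≠ A) {a : ↥A} (ha : (a : V) ∈ D) :
    collapseSetoid A D ≠ ⊤ := by
  obtain ⟨w, hwA, hwD⟩ := Set.not_subset.1 fun h => hD (hDA.antisymm h)
  intro htop
  rcases Setoid.eq_top_iff.1 htop a ⟨w, hwA⟩ with h | h
  exacts [hwD ((show (a : V) = w from h) ▸ ha), hwD h.2]

end Blocks

lemma IsGreatestProperDecomp.isStrong_image_rel {I : Set (Set V)} (hI : IsIntervalSystem I)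
    {A : Set V} (hA : A ∈ I) {μ : Setoid ↥A} (hμ : IsGreatestProperDecomp I A μ) (x : ↥A) :
    IsStrong I (Subtype.val '' {y | μ.r x y}) := by
  obtain ⟨hclos, -, hI0, hI1, hI2⟩ := hI
  set B := Subtype.val '' {y | μ.r x y}
  have hBI : B ∈ I := hμ.1.image_rel_mem hclos hA x
  have hBA : B ⊆ A := Subtype.coe_image_subset A _
  refine ⟨hBI, fun C hC ⟨a, haB, haC⟩ => ?_⟩
  by_contra! hoverlap
  obtain ⟨b, hbB, hbC⟩ := Set.not_subset.1 hoverlap.1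
  obtain ⟨c, hcC, hcB⟩ := Set.not_subset.1 hoverlap.2
  lift a to ↥A using hBA haB
  lift b to ↥A using hBA hbB
  have hxa := (val_mem_image_rel_iff μ x a).1 haB
  have hxb := (val_mem_image_rel_iff μ x b).1 hbB
  by_cases hcollapse : C ⊆ A ∧ B ∪ C ≠ A
  · obtain ⟨hCA, hBC⟩ := hcollapse
    have hle : collapseSetoid A (B ∪ C) ≤ μ :=
      hμ.2.2 _ (isRestDecomp_collapseSetoid hI0 (hI1 B hBI C hC ⟨a, haB, haC⟩))
        (collapseSetoid_ne_top (Set.union_subset hBA hCA) hBC (Or.inl haB))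
    exact hcB ((val_mem_image_rel_iff μ x ⟨c, hCA hcC⟩).2
      (μ.trans' hxa (hle (Or.inr ⟨Or.inl haB, Or.inr hcC⟩))))
  · have hAC : A \ C ∈ I := by
      by_cases hCA : C ⊆ A
      · have hBC : A \ C = B \ C := by
          rw [← not_ne_iff.1 (not_and.1 hcollapse hCA), Set.union_sdiff_right]
        exact hBC ▸ (hI2 B hBI C hC ⟨a, haB, haC⟩ hoverlap.1 hoverlap.2).1
      · exact (hI2 A hA C hC ⟨a, a.2, haC⟩ (fun h => hbC (h b.2)) hCA).1
    have hle : splitSetoid A C ≤ μ :=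
      hμ.2.2 _ (isRestDecomp_splitSetoid hC hAC) (splitSetoid_ne_top haC hbC)
    exact hμ.2.1 (eq_top_of_splitSetoid_le hle (μ.trans' (μ.symm' hxa) hxb) haC hbC)

theorem stmt11_general (I : Set (Set V)) (hI : IsIntervalSystem I)
    (A : Set V) (hA : A ∈ I)
    (μ : Setoid ↥A) (hμ : IsGreatestProperDecomp I A μ) :
    ∀ x : ↥A, IsStrong I (Subtype.val '' {y | μ.r x y}) :=
  hμ.isStrong_image_rel hI hA

/-- In an interval system, if `A ∈ I` admits a greatest proper decomposition
(which has at least two blocks), then every one of its blocks is a strong set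
of `(V, I)`. -/
theorem stmt11 (I : Set (Set V)) (hI : IsIntervalSystem I)
    (A : Set V) (hA : A ∈ I)
    (μ : Setoid ↥A) (hμ : IsGreatestProperDecomp I A μ)
    (h2 : ∃ B₁ ∈ μ.classes, ∃ B₂ ∈ μ.classes, B₁ ≠ B₂) :
    ∀ x : ↥A, IsStrong I (Subtype.val '' {y | μ.r x y}) :=
  stmt11_general I hI A hA μ hμ
end

section
/- Let (V, I) be an interval system such that D(V, I) has finite length. Then the following are equivalent: (i) D(V, I) is atomistic; (ii) D(V, I) is geometric; (iii) D(V, I) is dually atomistic; (iv) (V, I) has no proper strong intervals (strong sets other than ∅, V, and singletons). -/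
variable {V : Type*}

variable (Q : Set (Set V))

/-- An atom of `D(V,Q)`: a decomposition strictly above `Δ = ⊥` with nothing
strictly between. -/
def DAtom (a : Decomp Q) : Prop :=
  (⊥ : Setoid V) < a.1 ∧ ∀ b : Decomp Q, b.1 < a.1 → b.1 = ⊥

/-- A coatom of `D(V,Q)`. -/
def DCoatom (m : Decomp Q) : Prop :=
  m.1 < (⊤ : Setoid V) ∧ ∀ b : Decomp Q, m.1 < b.1 → b.1 = ⊤

/-- `D(V,Q)` is atomistic: every element is the join (in `D(V,Q)`) of the
atoms below it. -/
def DAtomistic : Prop :=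
  ∀ π : Decomp Q, IsLUB {a : Decomp Q | DAtom Q a ∧ a ≤ π} π

/-- `D(V,Q)` is dually atomistic: every element is the meet of the coatoms
above it. -/
def DDuallyAtomistic : Prop :=
  ∀ π : Decomp Q, IsGLB {m : Decomp Q | DCoatom Q m ∧ π ≤ m} π

/-- `D(V,Q)` is (upper) semimodular: if `a ⊓ b ≺ a` then `b ≺ a ⊔ b`. -/
def DSemimodular : Prop :=
  ∀ a b j m : Decomp Q, IsLUB {a, b} j → IsGLB {a, b} m →
    m ⋖ a → b ⋖ j

/-- A compact element of `D(V,Q)`. -/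
def DCompact (k : Decomp Q) : Prop :=
  ∀ (S : Set (Decomp Q)) (j : Decomp Q), IsLUB S j → k ≤ j →
    ∃ F ⊆ S, F.Finite ∧ ∃ g : Decomp Q, IsLUB F g ∧ k ≤ g

/-- `D(V,Q)` is algebraic: complete and every element is the join of the
compact elements below it. -/
def DAlgebraic : Prop :=
  (∀ S : Set (Decomp Q), ∃ j : Decomp Q, IsLUB S j) ∧
    ∀ π : Decomp Q, IsLUB {k : Decomp Q | DCompact Q k ∧ k ≤ π} π

/-- `D(V,Q)` is geometric: atomistic, semimodular and algebraic. -/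
def DGeometric : Prop := DAtomistic Q ∧ DSemimodular Q ∧ DAlgebraic Q

/-!
The atoms of `D(V, I)` are the partitions `ofBlock C` whose only nontrivial block is a minimal
nontrivial member `C` of `I`. Joining `ofBlock C` to a decomposition `b` merges the blocks of
`b` meeting `C`, and the minimality of `C` makes this join cover `b`. In an atomistic `D(V, I)`
this covering property gives semimodularity, and shows that a decomposition maximal among those
not above a fixed atom is a coatom, whence dual atomisticity. A proper strong set `A` lies in a
single block of every coatom, so dual atomisticity rules it out. Finally, without proper strong
sets every nontrivial member `B` is connected by the minimal nontrivial members inside it: for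
an inclusion-minimal counterexample `B`, the component of a minimal member absorbs every member
properly inside `B` that it meets, and (I₂) then makes it a proper strong set. Hence any two
points in a block of a decomposition are linked through atoms below it, which is atomisticity.
Finite length supplies the maximal and minimal elements used throughout and makes every
decomposition compact.
-/

lemma mem_upperBounds_pair {α : Type*} [Preorder α] {a b u : α} :
    u ∈ upperBounds {a, b} ↔ a ≤ u ∧ b ≤ u := by
  simp [upperBounds_insert]

lemma mem_lowerBounds_pair {α : Type*} [Preorder α] {a b u : α} :
    u ∈ lowerBounds {a, b} ↔ u ≤ a ∧ u ≤ b := by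
  simp [lowerBounds_insert]

lemma FiniteDimensionalOrder.of_length_le {α : Type*} [Preorder α] [Nonempty α] {n : ℕ}
    (h : ∀ c : LTSeries α, c.length ≤ n) : FiniteDimensionalOrder α :=
  not_infiniteDimensionalOrder_iff.mp fun _ ↦ by simpa using h (LTSeries.withLength α (n + 1))

lemma FiniteDimensionalOrder.wellFoundedLT {α : Type*} [Preorder α] [FiniteDimensionalOrder α] :
    WellFoundedLT α :=
  ⟨SetRel.IsWellFounded.of_finiteDimensional {(a, b) : α × α | a < b}⟩

lemma FiniteDimensionalOrder.wellFoundedGT {α : Type*} [Preorder α] [FiniteDimensionalOrder α] :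
    WellFoundedGT α :=
  ⟨SetRel.IsWellFounded.inv_of_finiteDimensional {(a, b) : α × α | a < b}⟩

namespace Setoid

def block (π : Setoid V) (x : V) : Set V := {y | π.r x y}

lemma mem_block_self (π : Setoid V) (x : V) : x ∈ π.block x := π.refl' x

def ofBlock (A : Set V) : Setoid V where
  r x y := x = y ∨ (x ∈ A ∧ y ∈ A)
  iseqv := by
    refine ⟨fun x ↦ .inl rfl, ?_, ?_⟩
    · rintro x y (rfl | ⟨hx, hy⟩); exacts [.inl rfl, .inr ⟨hy, hx⟩]
    · rintro x y z (rfl | ⟨hx, hy⟩) h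
      · exact h
      · rcases h with rfl | ⟨-, hz⟩; exacts [.inr ⟨hx, hy⟩, .inr ⟨hx, hz⟩]

variable {A B C : Set V} {π : Setoid V}

lemma block_ofBlock_of_mem {x : V} (hx : x ∈ A) : (ofBlock A).block x = A :=
  Set.ext fun _ ↦
    ⟨by rintro (rfl | ⟨-, hy⟩); exacts [hx, hy], fun hy ↦ .inr ⟨hx, hy⟩⟩

lemma block_ofBlock_of_notMem {x : V} (hx : x ∉ A) : (ofBlock A).block x = {x} :=
  Set.ext fun _ ↦
    ⟨by rintro (rfl | ⟨h, -⟩); exacts [rfl, absurd h hx], fun h ↦ .inl h.symm⟩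

lemma ofBlock_le_iff : ofBlock A ≤ π ↔ ∀ x ∈ A, ∀ y ∈ A, π.r x y :=
  ⟨fun h x hx y hy ↦ h (.inr ⟨hx, hy⟩),
    fun h x y ↦ by rintro (rfl | ⟨hx, hy⟩); exacts [π.refl' x, h x hx y hy]⟩

lemma ofBlock_mono (h : A ⊆ B) : ofBlock A ≤ ofBlock B :=
  ofBlock_le_iff.2 fun _ hx _ hy ↦ .inr ⟨h hx, h hy⟩

lemma ofBlock_block_le (π : Setoid V) (x : V) : ofBlock (π.block x) ≤ π :=
  ofBlock_le_iff.2 fun _ hy _ hz ↦ π.trans' (π.symm' hy) hz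

lemma nontrivial_block_iff {x : V} :
    (π.block x).Nontrivial ↔ ∃ y, π.r x y ∧ x ≠ y := by
  refine ⟨fun ⟨y, hy, z, hz, hyz⟩ ↦ ?_, fun ⟨y, hy, hxy⟩ ↦ ⟨x, π.refl' x, y, hy, hxy⟩⟩
  by_cases hxy : x = y
  · exact ⟨z, hz, hxy ▸ hyz⟩
  · exact ⟨y, hy, hxy⟩

lemma exists_nontrivial_block (h : π ≠ ⊥) : ∃ x, (π.block x).Nontrivial := by
  obtain ⟨x, y, hxy, hne⟩ : ∃ x y, π.r x y ∧ x ≠ y := by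
    by_contra! H
    exact h (le_bot_iff.1 fun x y hxy ↦ H x y hxy)
  exact ⟨x, nontrivial_block_iff.2 ⟨y, hxy, hne⟩⟩

lemma ofBlock_ne_bot (hA : A.Nontrivial) : ofBlock A ≠ ⊥ := by
  obtain ⟨x, hx, y, hy, hxy⟩ := hA
  intro h
  have : (ofBlock A).r x y := .inr ⟨hx, hy⟩
  rw [h] at this
  exact hxy this

lemma ofBlock_injOn : {A : Set V | A.Nontrivial}.InjOn ofBlock := by
  rintro A ⟨x, hx, y, hy, hxy⟩ B - h
  have hxB : x ∈ B := by
    have : (ofBlock B).r x y := h ▸ .inr ⟨hx, hy⟩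
    rcases this with rfl | ⟨hxB, -⟩
    exacts [absurd rfl hxy, hxB]
  rw [← block_ofBlock_of_mem hx, h, block_ofBlock_of_mem hxB]

lemma ofBlock_lt_ofBlock (hA : A.Nontrivial) (h : A ⊂ B) : ofBlock A < ofBlock B :=
  (ofBlock_mono h.subset).lt_of_ne fun he ↦ h.ne (ofBlock_injOn hA (hA.mono h.subset) he)


def saturation (π : Setoid V) (C : Set V) : Set V := {y | ∃ z ∈ C, π.r z y}

lemma subset_saturation (π : Setoid V) (C : Set V) : C ⊆ π.saturation C :=
  fun z hz ↦ ⟨z, hz, π.refl' z⟩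

lemma block_subset_saturation (π : Setoid V) {z : V} (hz : z ∈ C) :
    π.block z ⊆ π.saturation C :=
  fun _ hy ↦ ⟨z, hz, hy⟩

lemma mem_saturation_of_rel {x y : V} (hx : x ∈ π.saturation C) (hxy : π.r x y) :
    y ∈ π.saturation C :=
  let ⟨z, hz, hzx⟩ := hx; ⟨z, hz, π.trans' hzx hxy⟩

def joinBlock (π : Setoid V) (C : Set V) : Setoid V where
  r x y := π.r x y ∨ (x ∈ π.saturation C ∧ y ∈ π.saturation C)
  iseqv := by
    refine ⟨fun x ↦ .inl (π.refl' x), ?_, ?_⟩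
    · rintro x y (h | ⟨hx, hy⟩); exacts [.inl (π.symm' h), .inr ⟨hy, hx⟩]
    · rintro x y z (h | ⟨hx, hy⟩) (h' | ⟨hy', hz⟩)
      · exact .inl (π.trans' h h')
      · exact .inr ⟨mem_saturation_of_rel hy' (π.symm' h), hz⟩
      · exact .inr ⟨hx, mem_saturation_of_rel hy h'⟩
      · exact .inr ⟨hx, hz⟩

lemma block_joinBlock_of_mem {x : V} (hx : x ∈ π.saturation C) :
    (π.joinBlock C).block x = π.saturation C :=
  Set.ext fun _ ↦ ⟨by rintro (h | ⟨-, h⟩); exacts [mem_saturation_of_rel hx h, h],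
    fun hy ↦ .inr ⟨hx, hy⟩⟩

lemma block_joinBlock_of_notMem {x : V} (hx : x ∉ π.saturation C) :
    (π.joinBlock C).block x = π.block x :=
  Set.ext fun _ ↦ ⟨by rintro (h | ⟨h, -⟩); exacts [h, absurd h hx], .inl⟩

lemma le_joinBlock (π : Setoid V) (C : Set V) : π ≤ π.joinBlock C := fun _ _ ↦ .inl

lemma ofBlock_le_joinBlock (π : Setoid V) (C : Set V) : ofBlock C ≤ π.joinBlock C :=
  ofBlock_le_iff.2 fun _ hx _ hy ↦ .inr ⟨subset_saturation π C hx, subset_saturation π C hy⟩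

lemma joinBlock_le {ρ : Setoid V} (hπ : π ≤ ρ) (hC : ofBlock C ≤ ρ) :
    π.joinBlock C ≤ ρ := by
  rintro x y (h | ⟨⟨z, hz, hzx⟩, ⟨z', hz', hz'y⟩⟩)
  · exact hπ h
  · exact ρ.trans' (ρ.trans' (ρ.symm' (hπ hzx)) (ofBlock_le_iff.1 hC z hz z' hz')) (hπ hz'y)

end Setoid

namespace IsIntervalSystem

open Setoid

variable {I : Set (Set V)} {A B C : Set V}

lemma univ_mem (hI : IsIntervalSystem I) : Set.univ ∈ I := hI.1.1

lemma singleton_mem (hI : IsIntervalSystem I) (x : V) : {x} ∈ I := hI.2.2.1.2 x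

lemma inter_mem (hI : IsIntervalSystem I) (hA : A ∈ I) (hB : B ∈ I) : A ∩ B ∈ I := by
  simpa using hI.1.2 {A, B} (Set.pair_subset hA hB) (Set.insert_nonempty A {B})

lemma union_mem (hI : IsIntervalSystem I) (hA : A ∈ I) (hB : B ∈ I) (h : (A ∩ B).Nonempty) :
    A ∪ B ∈ I :=
  hI.2.2.2.1 A hA B hB h

lemma diff_mem (hI : IsIntervalSystem I) (hA : A ∈ I) (hB : B ∈ I) (h : (A ∩ B).Nonempty)
    (hAB : ¬ A ⊆ B) (hBA : ¬ B ⊆ A) : A \ B ∈ I :=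
  (hI.2.2.2.2 A hA B hB h hAB hBA).1

lemma isDecomp_ofBlock (hI : IsIntervalSystem I) (hA : A ∈ I) : IsDecomp I (ofBlock A) := by
  intro x
  change (ofBlock A).block x ∈ I
  by_cases hx : x ∈ A
  · rwa [block_ofBlock_of_mem hx]
  · rw [block_ofBlock_of_notMem hx]; exact hI.singleton_mem x

def decompOfBlock (hI : IsIntervalSystem I) (hA : A ∈ I) : Decomp I :=
  ⟨ofBlock A, hI.isDecomp_ofBlock hA⟩

def botDecomp (hI : IsIntervalSystem I) : Decomp I :=
  ⟨⊥, fun x ↦ by simpa [Set.ofPred_eq_eq_singleton'] using hI.singleton_mem x⟩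

def topDecomp (hI : IsIntervalSystem I) : Decomp I :=
  ⟨⊤, fun _ ↦ hI.univ_mem⟩

lemma exists_isGLB (hI : IsIntervalSystem I) (S : Set (Decomp I)) : ∃ g, IsGLB S g := by
  have hblock (x : V) : {y | (sInf (Subtype.val '' S)).r x y} = ⋂ d ∈ S, d.1.block x := by
    ext y; simp [Setoid.sInf_iff, Setoid.block]
  refine ⟨⟨sInf (Subtype.val '' S), fun x ↦ ?_⟩,
    fun d hd ↦ sInf_le (α := Setoid V) ⟨d, hd, rfl⟩,
    fun b hb ↦ le_sInf (α := Setoid V) fun _ ⟨d, hd, h⟩ ↦ h ▸ hb hd⟩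
  rw [hblock, ← Set.sInter_image]
  rcases S.eq_empty_or_nonempty with rfl | hS
  · simpa using hI.univ_mem
  · exact hI.1.2 _ (by rintro _ ⟨d, -, rfl⟩; exact d.2 x) (hS.image _)

lemma exists_isLUB (hI : IsIntervalSystem I) (S : Set (Decomp I)) : ∃ j, IsLUB S j := by
  obtain ⟨g, hg⟩ := hI.exists_isGLB (upperBounds S)
  exact ⟨g, fun s hs ↦ hg.2 fun _ hu ↦ hu hs, fun _ hu ↦ hg.1 hu⟩

variable (I) in
def nontrivialMembers : Set (Set V) := {A | A ∈ I ∧ A.Nontrivial}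

lemma wellFoundedOn_nontrivialMembers_lt [WellFoundedLT (Decomp I)]
    (hI : IsIntervalSystem I) : (nontrivialMembers I).WellFoundedOn (· < ·) :=
  have h : {π : Setoid V | IsDecomp I π}.WellFoundedOn (· < ·) :=
    wellFounded_lt (α := Decomp I)
  (h.mapsTo ofBlock fun _ hA ↦ hI.isDecomp_ofBlock hA.1).mono'
    fun _ hA _ _ hAB ↦ ofBlock_lt_ofBlock hA.2 hAB

lemma wellFoundedOn_nontrivialMembers_gt [WellFoundedGT (Decomp I)]
    (hI : IsIntervalSystem I) : (nontrivialMembers I).WellFoundedOn (· > ·) :=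
  have h : {π : Setoid V | IsDecomp I π}.WellFoundedOn (· > ·) :=
    wellFounded_gt (α := Decomp I)
  (h.mapsTo ofBlock fun _ hA ↦ hI.isDecomp_ofBlock hA.1).mono'
    fun _ _ _ hB hBA ↦ ofBlock_lt_ofBlock hB.2 hBA

lemma exists_minimal_subset [WellFoundedLT (Decomp I)] (hI : IsIntervalSystem I)
    (hB : B ∈ nontrivialMembers I) : ∃ C ⊆ B, Minimal (· ∈ nontrivialMembers I) C := by
  obtain ⟨C, ⟨hC, hCB⟩, hCmin⟩ := (hI.wellFoundedOn_nontrivialMembers_lt.subset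
    Set.inter_subset_left).exists_minimal ⟨B, hB, Set.mem_Iic.2 le_rfl⟩
  exact ⟨C, hCB, hC, fun D hD hDC ↦ hCmin ⟨hD, hDC.trans hCB⟩ hDC⟩

lemma dAtom_iff (hI : IsIntervalSystem I) (a : Decomp I) :
    DAtom I a ↔ ∃ C, Minimal (· ∈ nontrivialMembers I) C ∧ a.1 = ofBlock C := by
  constructor
  · rintro ⟨hbot, hmin⟩
    have eq_of_le {D : Set V} (hD : D ∈ nontrivialMembers I) (hDa : ofBlock D ≤ a.1) :
        ofBlock D = a.1 :=
      hDa.eq_of_not_lt fun hlt ↦ ofBlock_ne_bot hD.2 (hmin (hI.decompOfBlock hD.1) hlt)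
    obtain ⟨x, hx⟩ := exists_nontrivial_block hbot.ne'
    have hB : a.1.block x ∈ nontrivialMembers I := ⟨a.2 x, hx⟩
    have ha := eq_of_le hB (ofBlock_block_le a.1 x)
    refine ⟨a.1.block x, ⟨hB, fun D hD hDB ↦ ?_⟩, ha.symm⟩
    exact (ofBlock_injOn hD.2 hx ((eq_of_le hD (ha ▸ ofBlock_mono hDB)).trans ha.symm)).ge
  · rintro ⟨C, hC, ha⟩
    refine ⟨ha ▸ bot_lt_iff_ne_bot.2 (ofBlock_ne_bot hC.1.2), fun b hb ↦ ?_⟩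
    by_contra hbot
    obtain ⟨x, hx⟩ := exists_nontrivial_block hbot
    have hba : b.1 ≤ ofBlock C := ha ▸ hb.le
    obtain ⟨y, hxy, hne⟩ := nontrivial_block_iff.1 hx
    have hxC : x ∈ C := by rcases hba hxy with h | h; exacts [absurd h hne, h.1]
    have hblock : b.1.block x ⊆ C := fun z hz ↦ by
      rcases hba hz with rfl | h; exacts [hxC, h.2]
    have := hC.eq_of_le ⟨b.2 x, hx⟩ hblock
    exact hb.not_ge (ha ▸ this ▸ ofBlock_block_le b.1 x)

lemma saturation_mem [WellFoundedGT (Decomp I)] (hI : IsIntervalSystem I) (b : Decomp I)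
    (hC : C ∈ nontrivialMembers I) : b.1.saturation C ∈ I := by
  set F := {A | A ∈ I ∧ C ⊆ A ∧ A ⊆ b.1.saturation C}
  have hF : F ⊆ nontrivialMembers I := fun A hA ↦ ⟨hA.1, hC.2.mono hA.2.1⟩
  obtain ⟨M, hM⟩ := (hI.wellFoundedOn_nontrivialMembers_gt.subset hF).exists_maximal
    ⟨C, hC.1, subset_rfl, subset_saturation _ _⟩
  suffices b.1.saturation C ⊆ M from hM.1.2.2.antisymm this ▸ hM.1.1
  rintro y ⟨z, hz, hzy⟩
  have hunion : M ∪ b.1.block z ∈ F :=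
    ⟨hI.union_mem hM.1.1 (b.2 z) ⟨z, hM.1.2.1 hz, mem_block_self _ _⟩,
      hM.1.2.1.trans Set.subset_union_left,
      Set.union_subset hM.1.2.2 (block_subset_saturation _ hz)⟩
  exact hM.2 hunion Set.subset_union_left (Or.inr hzy)

lemma isDecomp_joinBlock (b : Decomp I) (hC : b.1.saturation C ∈ I) :
    IsDecomp I (b.1.joinBlock C) := by
  intro x
  change (b.1.joinBlock C).block x ∈ I
  by_cases hx : x ∈ b.1.saturation C
  · rwa [block_joinBlock_of_mem hx]
  · rw [block_joinBlock_of_notMem hx]; exact b.2 x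

/-- The blocks of `b` meeting a minimal nontrivial member `C` can only be merged all at once. -/
lemma ofBlock_le_of_lt_of_le_joinBlock (hI : IsIntervalSystem I)
    (hC : Minimal (· ∈ nontrivialMembers I) C) {b ρ : Decomp I} (hbρ : b.1 < ρ.1)
    (hρ : ρ.1 ≤ b.1.joinBlock C) : ofBlock C ≤ ρ.1 := by
  obtain ⟨u, v, huv, hbuv⟩ : ∃ u v, ρ.1.r u v ∧ ¬ b.1.r u v := by
    by_contra! H; exact hbρ.not_ge fun u v ↦ H u v
  obtain h | ⟨⟨z, hz, hzu⟩, ⟨z', hz', hz'v⟩⟩ := hρ huv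
  · exact absurd h hbuv
  have hzz' : z ≠ z' := by
    rintro rfl; exact hbuv (b.1.trans' (b.1.symm' hzu) hz'v)
  have hzU : z ∈ ρ.1.block u := ρ.1.symm' (hbρ.le hzu)
  have hz'U : z' ∈ ρ.1.block u := ρ.1.trans' huv (ρ.1.symm' (hbρ.le hz'v))
  have hCU : C ⊆ ρ.1.block u := by
    have := hC.eq_of_le ⟨hI.inter_mem (ρ.2 u) hC.1.1, z, ⟨hzU, hz⟩, z', ⟨hz'U, hz'⟩, hzz'⟩
      Set.inter_subset_right
    exact this ▸ Set.inter_subset_left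
  exact ofBlock_le_iff.2 fun x hx y hy ↦ ρ.1.trans' (ρ.1.symm' (hCU hx)) (hCU hy)

lemma exists_isLUB_covBy_of_dAtom [WellFoundedGT (Decomp I)] (hI : IsIntervalSystem I)
    {a b : Decomp I} (ha : DAtom I a) (hab : ¬ a ≤ b) : ∃ j, IsLUB {b, a} j ∧ b ⋖ j := by
  obtain ⟨C, hC, haC⟩ := (hI.dAtom_iff a).1 ha
  obtain rfl : a = hI.decompOfBlock hC.1.1 := Subtype.ext haC
  let j : Decomp I := ⟨b.1.joinBlock C, isDecomp_joinBlock b (hI.saturation_mem b hC.1)⟩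
  have hj : IsLUB {b, hI.decompOfBlock hC.1.1} j := by
    refine ⟨?_, fun ρ hρ ↦ joinBlock_le (hρ (Or.inl rfl)) (hρ (Or.inr rfl))⟩
    rintro _ (rfl | rfl)
    exacts [le_joinBlock _ _, ofBlock_le_joinBlock _ _]
  refine ⟨j, hj, (hj.1 (Or.inl rfl)).lt_of_ne fun h ↦ hab (h ▸ hj.1 (Or.inr rfl)), ?_⟩
  exact fun ρ hbρ hρj ↦ hρj.not_ge <|
    joinBlock_le hbρ.le (hI.ofBlock_le_of_lt_of_le_joinBlock hC hbρ hρj.le)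

variable (I) in
def Linked (B : Set V) (x y : V) : Prop :=
  ∃ C ⊆ B, Minimal (· ∈ nontrivialMembers I) C ∧ x ∈ C ∧ y ∈ C

instance : Std.Symm (Linked I B) :=
  ⟨fun _ _ ⟨C, hCB, hC, hx, hy⟩ ↦ ⟨C, hCB, hC, hy, hx⟩⟩

lemma Linked.mono {B' : Set V} (h : B ⊆ B') {x y : V} (hxy : Linked I B x y) :
    Linked I B' x y :=
  let ⟨C, hCB, hC, hx, hy⟩ := hxy; ⟨C, hCB.trans h, hC, hx, hy⟩

variable (I) in
def component (B : Set V) (x : V) : Set V := {y | Relation.ReflTransGen (Linked I B) x y}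

lemma component_subset {x : V} (hx : x ∈ B) : component I B x ⊆ B := fun _ hy ↦ by
  induction hy with
  | refl => exact hx
  | tail _ hzy _ => obtain ⟨C, hCB, -, -, hy⟩ := hzy; exact hCB hy

lemma subset_component (hC : Minimal (· ∈ nontrivialMembers I) C) (hCB : C ⊆ B) {x : V}
    (hx : x ∈ C) : C ⊆ component I B x :=
  fun _ hy ↦ .single ⟨C, hCB, hC, hx, hy⟩

lemma component_mem [WellFoundedGT (Decomp I)] (hI : IsIntervalSystem I) (B : Set V)
    (x : V) : component I B x ∈ I := by
  set K := component I B x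
  set F := {A | A ∈ nontrivialMembers I ∧ x ∈ A ∧ A ⊆ K}
  rcases F.eq_empty_or_nonempty with hF | hF
  · suffices K = {x} from this ▸ hI.singleton_mem x
    refine Set.eq_singleton_iff_unique_mem.2 ⟨.refl, fun y hy ↦ ?_⟩
    obtain rfl | ⟨z, ⟨C, hCB, hC, hxC, -⟩, -⟩ := hy.cases_head
    · rfl
    · exact (hF.subset ⟨hC.1, hxC, subset_component hC hCB hxC⟩).elim
  obtain ⟨M, hM⟩ :=
    (hI.wellFoundedOn_nontrivialMembers_gt.subset fun _ hA ↦ hA.1).exists_maximal hF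
  suffices K ⊆ M from hM.1.2.2.antisymm this ▸ hM.1.1.1
  intro y hy
  induction hy with
  | refl => exact hM.1.2.1
  | tail hxz hzy ih =>
    obtain ⟨C, hCB, hC, hzC, hyC⟩ := hzy
    have hCK : C ⊆ K := fun c hc ↦ hxz.tail ⟨C, hCB, hC, hzC, hc⟩
    have hMC : M ∪ C ∈ F :=
      ⟨⟨hI.union_mem hM.1.1.1 hC.1.1 ⟨_, ih, hzC⟩, hM.1.1.2.mono Set.subset_union_left⟩,
        .inl hM.1.2.1, Set.union_subset hM.1.2.2 hCK⟩
    exact hM.2 hMC Set.subset_union_left (.inr hyC)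

/-- A member `E` overlapping `R` would put both `E ∩ B` and `B \ E` (a member by (I₂)) into `R`,
and then `R = B`. -/
lemma isStrong_of_absorbing (hI : IsIntervalSystem I) {R : Set V} (hB : B ∈ I) (hR : R ∈ I)
    (hRB : R ⊆ B) (hRB' : R ≠ B)
    (habs : ∀ D ∈ I, D ⊆ B → D ≠ B → (D ∩ R).Nonempty → D ⊆ R) : IsStrong I R := by
  refine ⟨hR, fun E hE ⟨z, hzR, hzE⟩ ↦ ?_⟩
  by_contra! hRE
  obtain ⟨hRE, hER⟩ := hRE
  have hBE : ¬ B ⊆ E := fun h ↦ hRE (hRB.trans h)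
  have hEB : E ∩ B ⊆ R := habs _ (hI.inter_mem hE hB) Set.inter_subset_right
    (fun h ↦ hBE (h ▸ Set.inter_subset_left)) ⟨z, ⟨hzE, hRB hzR⟩, hzR⟩
  have hEB' : ¬ E ⊆ B := fun h ↦ hER fun e he ↦ hEB ⟨he, h he⟩
  obtain ⟨r, hrR, hrE⟩ := Set.not_subset.1 hRE
  have hBE' : B \ E ⊆ R := habs _ (hI.diff_mem hB hE ⟨z, hRB hzR, hzE⟩ hBE hEB')
    Set.sdiff_subset (fun h ↦ ((Set.ext_iff.1 h z).2 (hRB hzR)).2 hzE) ⟨r, ⟨hRB hrR, hrE⟩, hrR⟩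
  exact hRB' (hRB.antisymm fun b hb ↦
    (em (b ∈ E)).elim (fun hbE ↦ hEB ⟨hbE, hb⟩) fun hbE ↦ hBE' ⟨hb, hbE⟩)

variable (I) in
def HasNoProperStrong : Prop :=
  ∀ A : Set V, IsStrong I A → A = ∅ ∨ A = Set.univ ∨ ∃ x : V, A = {x}

lemma component_eq_of_forall_ssubset [WellFoundedGT (Decomp I)] (hI : IsIntervalSystem I)
    (hns : HasNoProperStrong I) (hB : B ∈ I) (hC : Minimal (· ∈ nontrivialMembers I) C)
    (hCB : C ⊆ B) {x : V} (hx : x ∈ C)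
    (ih : ∀ D ∈ nontrivialMembers I, D ⊂ B → ∀ u ∈ D, ∀ v ∈ D,
      Relation.ReflTransGen (Linked I D) u v) :
    component I B x = B := by
  have hRB : component I B x ⊆ B := component_subset (hCB hx)
  have hCR : C ⊆ component I B x := subset_component hC hCB hx
  by_contra hRB'
  have habs (D : Set V) (hD : D ∈ I) (hDB : D ⊆ B) (hDB' : D ≠ B)
      (hDR : (D ∩ component I B x).Nonempty) : D ⊆ component I B x := by
    obtain ⟨z, hzD, hzR⟩ := hDR
    intro w hw
    by_cases hD' : D.Nontrivial
    · exact hzR.trans <| Relation.ReflTransGen.mono (fun _ _ ↦ Linked.mono hDB) _ _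
        (ih D ⟨hD, hD'⟩ (hDB.ssubset_of_ne hDB') z hzD w hw)
    · exact (Set.not_nontrivial_iff.1 hD' hzD hw) ▸ hzR
  obtain h | h | ⟨w, h⟩ :=
    hns _ (hI.isStrong_of_absorbing hB (hI.component_mem B x) hRB hRB' habs)
  · exact (h ▸ hCR hx : x ∈ (∅ : Set V))
  · exact hRB' (hRB.antisymm (h ▸ Set.subset_univ B))
  · exact hC.1.2.not_subset_singleton (h ▸ hCR)

lemma reflTransGen_linked [WellFoundedLT (Decomp I)] [WellFoundedGT (Decomp I)]
    (hI : IsIntervalSystem I) (hns : HasNoProperStrong I) (hB : B ∈ nontrivialMembers I)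
    {x y : V} (hx : x ∈ B) (hy : y ∈ B) : Relation.ReflTransGen (Linked I B) x y := by
  refine hI.wellFoundedOn_nontrivialMembers_lt.induction hB
    (P := fun B ↦ ∀ x ∈ B, ∀ y ∈ B, Relation.ReflTransGen (Linked I B) x y) ?_ x hx y hy
  intro B hB ih x hx y hy
  obtain ⟨C, hCB, hC⟩ := hI.exists_minimal_subset hB
  obtain ⟨c, hc⟩ := hC.1.2.nonempty
  have hR := hI.component_eq_of_forall_ssubset hns hB.1 hC hCB hc ih
  exact (Std.Symm.symm _ _ (hR.ge hx)).trans (hR.ge hy)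

lemma dAtomistic_of_hasNoProperStrong [WellFoundedLT (Decomp I)] [WellFoundedGT (Decomp I)]
    (hI : IsIntervalSystem I) (hns : HasNoProperStrong I) : DAtomistic I := by
  refine fun π ↦ ⟨fun _ ha ↦ ha.2, fun ρ hρ x y hxy ↦ ?_⟩
  by_cases hB : (π.1.block x).Nontrivial
  · replace hxy := hI.reflTransGen_linked hns ⟨π.2 x, hB⟩ (mem_block_self _ x) hxy
    induction hxy with
    | refl => exact ρ.1.refl' x
    | tail _ hzy ih =>
      obtain ⟨C, hCB, hC, hzC, hyC⟩ := hzy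
      have hCπ : hI.decompOfBlock hC.1.1 ≤ π :=
        (ofBlock_mono hCB).trans (ofBlock_block_le _ _)
      exact ρ.1.trans' ih (hρ ⟨(hI.dAtom_iff _).2 ⟨C, hC, rfl⟩, hCπ⟩ (.inr ⟨hzC, hyC⟩))
  · exact Set.not_nontrivial_iff.1 hB (mem_block_self _ x) hxy ▸ ρ.1.refl' x

lemma exists_dAtom_le_not_le (hAt : DAtomistic I) {a b : Decomp I} (h : ¬ a ≤ b) :
    ∃ c, DAtom I c ∧ c ≤ a ∧ ¬ c ≤ b := by
  by_contra! H
  exact h ((hAt a).2 fun c hc ↦ H c hc.1 hc.2)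

lemma dSemimodular_of_dAtomistic [WellFoundedGT (Decomp I)] (hI : IsIntervalSystem I)
    (hAt : DAtomistic I) : DSemimodular I := by
  intro a b j m hj hm hma
  obtain ⟨c, hc, hca, hcm⟩ := exists_dAtom_le_not_le hAt hma.lt.not_ge
  have hcb : ¬ c ≤ b := fun h ↦ hcm (hm.2 (mem_lowerBounds_pair.2 ⟨hca, h⟩))
  obtain ⟨j', hj', hbj'⟩ := hI.exists_isLUB_covBy_of_dAtom hc hcb
  -- `m ⋖ a` forces `a = m ⊔ c`
  have haj' : a ≤ j' := by
    obtain ⟨k, hk⟩ := hI.exists_isLUB {m, c}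
    have hmk : m < k := (hk.1 (.inl rfl)).lt_of_ne fun h ↦ hcm (h ▸ hk.1 (.inr rfl))
    have hka : k ≤ a := hk.2 (mem_upperBounds_pair.2 ⟨hma.le, hca⟩)
    rw [← hka.eq_of_not_lt (hma.2 hmk)]
    exact hk.2 (mem_upperBounds_pair.2 ⟨(hm.1 (.inr rfl)).trans hbj'.le, hj'.1 (.inr rfl)⟩)
  have hjj' : j = j' := hj.unique ⟨mem_upperBounds_pair.2 ⟨haj', hbj'.le⟩,
    fun u hu ↦ hj'.2 (mem_upperBounds_pair.2 ⟨hu (.inr rfl), hca.trans (hu (.inl rfl))⟩)⟩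
  exact hjj' ▸ hbj'

lemma dCoatom_of_forall_lt [WellFoundedGT (Decomp I)] (hI : IsIntervalSystem I)
    (hAt : DAtomistic I) {a b : Decomp I} (ha : DAtom I a) (hab : ¬ a ≤ b)
    (hmax : ∀ ρ, b < ρ → a ≤ ρ) : DCoatom I b := by
  obtain ⟨j, hj, hbj⟩ := hI.exists_isLUB_covBy_of_dAtom ha hab
  have hj_le (ρ : Decomp I) (hρ : b < ρ) : j ≤ ρ :=
    hj.2 (mem_upperBounds_pair.2 ⟨hρ.le, hmax ρ hρ⟩)
  have le_hj (ρ : Decomp I) (hρ : b < ρ) : ρ ≤ j := by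
    refine (hAt ρ).2 fun c hc ↦ ?_
    by_cases hcb : c ≤ b
    · exact hcb.trans hbj.le
    obtain ⟨k, hk, hbk⟩ := hI.exists_isLUB_covBy_of_dAtom hc.1 hcb
    exact (hk.1 (.inr rfl)).trans ((hj_le k hbk.lt).eq_of_not_lt (hbk.2 hbj.lt)).ge
  have hbtop : b.1 < ⊤ := lt_top_iff_ne_top.2 fun h ↦ hab (h.symm ▸ le_top : a.1 ≤ b.1)
  exact ⟨hbtop, fun b' hb' ↦
    le_top.antisymm ((le_hj hI.topDecomp hbtop).trans (hj_le b' hb'))⟩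

lemma dDuallyAtomistic_of_dAtomistic [WellFoundedGT (Decomp I)] (hI : IsIntervalSystem I)
    (hAt : DAtomistic I) : DDuallyAtomistic I := by
  refine fun π ↦ ⟨fun _ hm ↦ hm.2, fun l hl ↦ ?_⟩
  by_contra hlπ
  obtain ⟨a, ha, hal, haπ⟩ := exists_dAtom_le_not_le hAt hlπ
  obtain ⟨b, hπb, hb⟩ := exists_maximal_ge_of_wellFoundedGT (fun ρ ↦ ¬ a ≤ ρ) π haπ
  have hcoatom := hI.dCoatom_of_forall_lt hAt ha hb.1 fun ρ hbρ ↦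
    not_not.1 fun h ↦ hbρ.not_ge (hb.2 h hbρ.le)
  exact hb.1 (hal.trans (hl ⟨hcoatom, hπb⟩))

lemma ofBlock_le_of_dCoatom (hA : IsStrong I A) (hA₀ : A.Nonempty) (hAu : A ≠ Set.univ)
    {m : Decomp I} (hm : DCoatom I m) : ofBlock A ≤ m.1 := by
  by_cases h : ∃ z ∈ A, A ⊆ m.1.block z
  · obtain ⟨z, -, hz⟩ := h
    exact (ofBlock_mono hz).trans (ofBlock_block_le _ _)
  push Not at h
  have hsat : m.1.saturation A = A := by
    refine (Set.Subset.antisymm ?_ (subset_saturation _ _))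
    rintro y ⟨z, hz, hzy⟩
    exact (hA.2 _ (m.2 z) ⟨z, hz, mem_block_self _ _⟩).resolve_left (h z hz) hzy
  let j : Decomp I := ⟨m.1.joinBlock A, isDecomp_joinBlock m (hsat.symm ▸ hA.1)⟩
  suffices m.1 = j.1 from this ▸ ofBlock_le_joinBlock _ _
  refine (le_joinBlock _ _).eq_of_not_lt fun hmj ↦ hAu ?_
  obtain ⟨z, hz⟩ := hA₀
  have hjz : j.1.block z = A := hsat ▸ block_joinBlock_of_mem (subset_saturation _ _ hz)
  rw [hm.2 j hmj] at hjz
  exact hjz ▸ Set.eq_univ_of_forall fun _ ↦ trivial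

lemma hasNoProperStrong_of_dDuallyAtomistic (hI : IsIntervalSystem I)
    (hD : DDuallyAtomistic I) : HasNoProperStrong I := by
  intro A hA
  by_contra! h
  obtain ⟨hA₀, hAu, hA₁⟩ := h
  have hnt : A.Nontrivial := hA₀.exists_eq_singleton_or_nontrivial
    |>.resolve_left fun ⟨x, hx⟩ ↦ hA₁ x hx
  have hbot : hI.decompOfBlock hA.1 ≤ hI.botDecomp :=
    (hD hI.botDecomp).2 fun m hm ↦ ofBlock_le_of_dCoatom hA hnt.nonempty hAu hm.1
  exact ofBlock_ne_bot hnt (le_bot_iff.1 hbot)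

lemma dCompact [WellFoundedGT (Decomp I)] (hI : IsIntervalSystem I) (k : Decomp I) :
    DCompact I k := by
  intro S j hj hkj
  obtain ⟨g, ⟨F, hFS, hF, hFg⟩, hg⟩ := exists_maximal_of_wellFoundedGT
    (fun g ↦ ∃ F ⊆ S, F.Finite ∧ IsLUB F g)
    (let ⟨g, hg⟩ := hI.exists_isLUB ∅; ⟨g, ∅, Set.empty_subset S, Set.finite_empty, hg⟩)
  refine ⟨F, hFS, hF, g, hFg, hkj.trans (hj.2 fun s hs ↦ ?_)⟩
  obtain ⟨g', hg'⟩ := hI.exists_isLUB (insert s F)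
  have hgg' : g ≤ g' := hFg.2 fun _ hu ↦ hg'.1 (Set.mem_insert_of_mem s hu)
  exact (hg'.1 (Set.mem_insert s F)).trans
    (hg ⟨insert s F, Set.insert_subset hs hFS, hF.insert s, hg'⟩ hgg')

lemma dAlgebraic [WellFoundedGT (Decomp I)] (hI : IsIntervalSystem I) : DAlgebraic I :=
  ⟨hI.exists_isLUB, fun π ↦ ⟨fun _ hk ↦ hk.2, fun _ hu ↦ hu ⟨hI.dCompact π, le_rfl⟩⟩⟩

end IsIntervalSystem

/-- For an interval system whose decomposition lattice has finite length,
the following are equivalent: (i) `D(V,I)` is atomistic; (ii) `D(V,I)` is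
geometric; (iii) `D(V,I)` is dually atomistic; (iv) `(V,I)` has no proper
strong intervals (every strong set is `∅`, `V`, or a singleton). -/
theorem stmt14 (I : Set (Set V)) (hI : IsIntervalSystem I)
    (hfl : ∃ n : ℕ, ∀ c : LTSeries (Decomp I), c.length ≤ n) :
    (DAtomistic I ↔ DGeometric I) ∧
    (DGeometric I ↔ DDuallyAtomistic I) ∧
    (DDuallyAtomistic I ↔
      ∀ A : Set V, IsStrong I A → A = ∅ ∨ A = Set.univ ∨ ∃ x : V, A = {x}) := by
  obtain ⟨n, hn⟩ := hfl
  have : Nonempty (Decomp I) := ⟨hI.botDecomp⟩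
  have : FiniteDimensionalOrder (Decomp I) := .of_length_le hn
  have : WellFoundedLT (Decomp I) := FiniteDimensionalOrder.wellFoundedLT
  have : WellFoundedGT (Decomp I) := FiniteDimensionalOrder.wellFoundedGT
  have hAG (hAt : DAtomistic I) : DGeometric I :=
    ⟨hAt, hI.dSemimodular_of_dAtomistic hAt, hI.dAlgebraic⟩
  have hAD := hI.dDuallyAtomistic_of_dAtomistic
  have hDN := hI.hasNoProperStrong_of_dDuallyAtomistic
  have hNA := hI.dAtomistic_of_hasNoProperStrong
  exact ⟨⟨hAG, And.left⟩, ⟨fun hG ↦ hAD hG.1, fun hD ↦ hAG (hNA (hDN hD))⟩,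
    ⟨hDN, fun hN ↦ hAD (hNA hN)⟩⟩
end

section
/- Let L be a lattice of finite length in which for every join-irreducible j, the element j* (the join of all elements strictly below j) is standard. Then L is a strong lattice: for every join-irreducible j and every x ∈ L, j ≤ j* ∨ x implies j ≤ x. -/
/-!
Finite length makes every element compact, so a join-irreducible `j` is not the join of the
elements below it: `j* < j`. If `j ≤ j* ⊔ x`, standardness of `j*` gives
`j = j ⊓ (j* ⊔ x) = j* ⊔ (j ⊓ x)`, and irreducibility then forces `j = j ⊓ x`.
-/

def IsStandardElt {L : Type*} [Lattice L] (a : L) : Prop :=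
  ∀ x y : L, x ⊓ (a ⊔ y) = (x ⊓ a) ⊔ (x ⊓ y)

lemma wellFoundedGT_of_forall_length_le {α : Type*} [Preorder α]
    (h : ∃ n : ℕ, ∀ c : LTSeries α, c.length ≤ n) : WellFoundedGT α := by
  obtain ⟨n, hn⟩ := h
  refine ⟨wellFounded_iff_isEmpty_descending_chain.2 ⟨fun ⟨f, hf⟩ => ?_⟩⟩
  exact n.lt_succ_self.not_ge (hn ⟨n + 1, fun i => f i, fun i => hf i⟩)

lemma supIrred_of_ne_bot {α : Type*} [SemilatticeSup α] [OrderBot α] {j : α} (hj0 : j ≠ ⊥)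
    (hj : ∀ a b : α, j = a ⊔ b → j = a ∨ j = b) : SupIrred j :=
  ⟨not_isMin_iff_ne_bot.2 hj0, fun b c hbc => (hj b c hbc.symm).imp Eq.symm Eq.symm⟩

lemma SupIrred.sSup_Iio_lt {α : Type*} [CompleteLattice α] [WellFoundedGT α] {j : α}
    (hj : SupIrred j) : sSup (Set.Iio j) < j := by
  obtain ⟨F, hFsub, hF⟩ := CompleteLattice.WellFoundedGT.isSupFiniteCompact α (Set.Iio j)
  refine (sSup_le fun _ hy => le_of_lt hy).lt_of_ne fun h => ?_
  obtain ⟨i, hi, rfl⟩ := hj.finset_sup_eq (hF ▸ h)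
  exact lt_irrefl _ (hFsub hi)

lemma IsStandardElt.le_of_le_sup {α : Type*} [Lattice α] {a j x : α} (ha : IsStandardElt a)
    (hj : SupIrred j) (haj : a < j) (h : j ≤ a ⊔ x) : j ≤ x := by
  have hdecomp : a ⊔ j ⊓ x = j := by
    rw [← inf_eq_right.2 haj.le, ← ha, inf_eq_left.2 h]
  rcases hj.2 hdecomp with hja | hjx
  · exact absurd hja haj.ne
  · exact hjx ▸ inf_le_right

/-- If `L` is a lattice of finite length in which `j* = ⋁{x | x < j}` is a
standard element for every join-irreducible `j`, then `L` is a strong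
lattice: `j ≤ j* ⊔ x` implies `j ≤ x`. -/
theorem stmt15 {L : Type*} [CompleteLattice L]
    (hfl : ∃ n : ℕ, ∀ c : LTSeries L, c.length ≤ n)
    (hstd : ∀ j : L, (j ≠ ⊥ ∧ ∀ a b : L, j = a ⊔ b → j = a ∨ j = b) →
      IsStandardElt (sSup {x : L | x < j})) :
    ∀ j : L, (j ≠ ⊥ ∧ ∀ a b : L, j = a ⊔ b → j = a ∨ j = b) →
      ∀ x : L, j ≤ sSup {y : L | y < j} ⊔ x → j ≤ x := by
  intro j hj x hle
  have : WellFoundedGT L := wellFoundedGT_of_forall_length_le hfl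
  have hirr : SupIrred j := supIrred_of_ne_bot hj.1 hj.2
  exact (hstd j hj).le_of_le_sup hirr hirr.sSup_Iio_lt hle
end

section
/- A lattice L of finite length is balanced (for all join-irreducible j and meet-irreducible m with j ≰ m: j ∨ m = m* ⟺ j ∧ m = j*) if and only if both L and its dual L^(d) are strong lattices. -/
section
variable {L : Type*} [CompleteLattice L]

/-- Join-irreducible element of a lattice. -/
def JoinIrred (j : L) : Prop := j ≠ ⊥ ∧ ∀ a b : L, j = a ⊔ b → j = a ∨ j = b

/-- Meet-irreducible element of a lattice. -/
def MeetIrred (m : L) : Prop := m ≠ ⊤ ∧ ∀ a b : L, m = a ⊓ b → m = a ∨ m = b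

/-- `j* = ⋁{x | x < j}`. -/
def lowerStar (j : L) : L := sSup {x : L | x < j}

/-- `m* = ⋀{x | x > m}`. -/
def upperStar (m : L) : L := sInf {x : L | m < x}

/-- `L` is strong. -/
def StrongLat (L : Type*) [CompleteLattice L] : Prop :=
  ∀ j x : L, JoinIrred j → j ≤ lowerStar j ⊔ x → j ≤ x

/-- The dual of `L` is strong. -/
def DualStrongLat (L : Type*) [CompleteLattice L] : Prop :=
  ∀ m x : L, MeetIrred m → upperStar m ⊓ x ≤ m → x ≤ m

/-- `L` is balanced. -/
def BalancedLat (L : Type*) [CompleteLattice L] : Prop :=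
  ∀ j m : L, JoinIrred j → MeetIrred m → ¬ j ≤ m →
    (j ⊔ m = upperStar m ↔ j ⊓ m = lowerStar j)

end


/-!
For `j ≰ m` the two sides of the balance condition say `j ≤ m*` and `j* ≤ m`, since `m < j ⊔ m`
and `j ⊓ m < j`. Strongness turns `j ≤ m* ≤ j* ⊔ m` into `j ≤ m` unless `j* ≤ m`, and dual
strongness gives the converse implication. Conversely, if `j ≤ j* ⊔ x` but `j ≰ x`, a maximal
`m ≥ x` with `j ≰ m` is meet-irreducible with `j ≤ m*`; balance then gives `j* ≤ m`, whence
`j ≤ m`. Passing to `Lᵒᵈ` exchanges all these notions definitionally, so each argument is only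
needed once.
-/

section FiniteLength

variable {α : Type*} [Preorder α] {n : ℕ}

theorem wellFoundedGT_of_length_le (h : ∀ c : LTSeries α, c.length ≤ n) : WellFoundedGT α := by
  refine ⟨wellFounded_iff_isEmpty_descending_chain.mpr ⟨fun ⟨f, hf⟩ => ?_⟩⟩
  have hf : StrictMono f := strictMono_nat_of_lt_succ hf
  have := h (LTSeries.mk (n + 1) (fun i => f i) (hf.comp Fin.val_strictMono))
  simp [LTSeries.mk] at this

theorem wellFoundedLT_of_length_le (h : ∀ c : LTSeries α, c.length ≤ n) : WellFoundedLT α :=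
  wellFoundedGT_of_length_le (α := αᵒᵈ) fun c => h c.reverse

end FiniteLength

section

variable {L : Type*} [CompleteLattice L] {j m : L}

theorem lowerStar_le_self (j : L) : lowerStar j ≤ j := sSup_le fun _ hx => hx.le

theorem le_lowerStar_of_lt {x : L} (h : x < j) : x ≤ lowerStar j := le_sSup h

theorem upperStar_le_of_lt {x : L} (h : m < x) : upperStar m ≤ x := sInf_le h

theorem sup_eq_upperStar_iff (hjm : ¬j ≤ m) : j ⊔ m = upperStar m ↔ j ≤ upperStar m := by
  refine ⟨fun h => h ▸ le_sup_left, fun h => le_antisymm ?_ ?_⟩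
  · exact sup_le h (le_sInf fun _ hx => hx.le)
  · exact upperStar_le_of_lt (right_lt_sup.mpr hjm)

theorem inf_eq_lowerStar_iff (hjm : ¬j ≤ m) : j ⊓ m = lowerStar j ↔ lowerStar j ≤ m := by
  refine ⟨fun h => h ▸ inf_le_right, fun h => le_antisymm ?_ ?_⟩
  · exact le_lowerStar_of_lt (inf_lt_left.mpr hjm)
  · exact le_inf (lowerStar_le_self j) h

theorem balancedLat_iff : BalancedLat L ↔ ∀ j m : L, JoinIrred j → MeetIrred m → ¬j ≤ m →
    (j ≤ upperStar m ↔ lowerStar j ≤ m) := by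
  refine forall₄_congr fun j m _ _ => forall_congr' fun hjm => ?_
  rw [sup_eq_upperStar_iff hjm, inf_eq_lowerStar_iff hjm]

theorem balancedLat_orderDual_iff : BalancedLat Lᵒᵈ ↔ BalancedLat L := by
  simp only [balancedLat_iff]
  exact ⟨fun h j m hj hm hjm => (h m j hm hj hjm).symm,
    fun h m j hm hj hjm => (h j m hj hm hjm).symm⟩

theorem meetIrred_of_forall_lt_imp_le (hjm : ¬j ≤ m) (habove : ∀ y, m < y → j ≤ y) :
    MeetIrred m := by
  refine ⟨fun h => hjm (h ▸ le_top), fun a b hab => ?_⟩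
  by_contra! hne
  have ha : m < a := lt_of_le_of_ne (hab ▸ inf_le_left) hne.1
  have hb : m < b := lt_of_le_of_ne (hab ▸ inf_le_right) hne.2
  exact hjm (hab ▸ le_inf (habove a ha) (habove b hb))

theorem StrongLat.lowerStar_le_of_le_upperStar (hs : StrongLat L) (hj : JoinIrred j)
    (hjm : ¬j ≤ m) (h : j ≤ upperStar m) : lowerStar j ≤ m := by
  by_contra hlm
  exact hjm (hs j m hj (h.trans (upperStar_le_of_lt (right_lt_sup.mpr hlm))))

theorem DualStrongLat.le_upperStar_of_lowerStar_le (hd : DualStrongLat L) (hm : MeetIrred m)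
    (hjm : ¬j ≤ m) (h : lowerStar j ≤ m) : j ≤ upperStar m :=
  StrongLat.lowerStar_le_of_le_upperStar (L := Lᵒᵈ) hd hm hjm h

theorem BalancedLat.of_strongLat_of_dualStrongLat (hs : StrongLat L) (hd : DualStrongLat L) :
    BalancedLat L :=
  balancedLat_iff.mpr fun _ _ hj hm hjm =>
    ⟨hs.lowerStar_le_of_le_upperStar hj hjm, hd.le_upperStar_of_lowerStar_le hm hjm⟩

theorem BalancedLat.strongLat [WellFoundedGT L] (hb : BalancedLat L) : StrongLat L := by
  intro j x hj hjx
  by_contra hjx'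
  obtain ⟨m, hxm, ⟨-, hjm⟩, hmax⟩ :=
    exists_maximal_ge_of_wellFoundedGT (fun y => x ≤ y ∧ ¬j ≤ y) x ⟨le_rfl, hjx'⟩
  have habove : ∀ y, m < y → j ≤ y := fun y hy => by
    by_contra hjy
    exact (Maximal.not_prop_of_gt ⟨⟨hxm, hjm⟩, hmax⟩ hy) ⟨hxm.trans hy.le, hjy⟩
  have hm : MeetIrred m := meetIrred_of_forall_lt_imp_le hjm habove
  have hlm : lowerStar j ≤ m := (balancedLat_iff.mp hb j m hj hm hjm).mp (le_sInf habove)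
  exact hjm (hjx.trans (sup_le hlm hxm))

theorem BalancedLat.dualStrongLat [WellFoundedLT L] (hb : BalancedLat L) : DualStrongLat L :=
  (balancedLat_orderDual_iff.mpr hb).strongLat

end

/-- A lattice of finite length is balanced iff both it and its dual are
strong. -/
theorem stmt18 {L : Type*} [CompleteLattice L]
    (hfl : ∃ n : ℕ, ∀ c : LTSeries L, c.length ≤ n) :
    BalancedLat L ↔ StrongLat L ∧ DualStrongLat L := by
  obtain ⟨n, hn⟩ := hfl
  have := wellFoundedGT_of_length_le hn
  have := wellFoundedLT_of_length_le hn
  exact ⟨fun hb => ⟨hb.strongLat, hb.dualStrongLat⟩,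
    fun ⟨hs, hd⟩ => .of_strongLat_of_dualStrongLat hs hd⟩
end
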